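/- arXiv:1507.03284 — 14 statements merged into one kernel-verified Lean document; each statement's English description precedes it below -/
import Mathlib

section
/- Let p and q be coprime positive integers with p < q and pq even, and set ω = p + q. Then there exists a unique integer τ with 0 < 2τ < ω such that either 2pτ ≡ 1 (mod ω) or 2pτ ≡ −1 (mod ω). -/
/-- An *even rational parameter* is a fraction `p/q` with `p, q` coprime positive
integers, `p < q`, and `p*q` even. -/
def EvenParam (p q : ℕ) : Prop :=
  Nat.Coprime p q ∧ 0 < p ∧ p < q ∧ Even (p * q)

/-- `τ` is the *tune* of `p/q`: `0 < 2τ < p+q` and `2pτ ≡ ±1 (mod p+q)`. -/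
def IsTune (p q τ : ℕ) : Prop :=
  0 < 2 * τ ∧ 2 * τ < p + q ∧
    (((p : ℤ) + q) ∣ 2 * p * τ - 1 ∨ ((p : ℤ) + q) ∣ 2 * p * τ + 1)

/-- `p'/q'` is the *even predecessor* of `p/q`. -/
def IsEvenPred (p q p' q' : ℕ) : Prop :=
  Nat.Coprime p' q' ∧ p' < q' ∧ Even (p' * q') ∧
    ((p : ℤ) * q' - (q : ℤ) * p').natAbs = 1 ∧ p' + q' < p + q

/-- `κ` is the unique nonnegative integer with `κ/(2κ+1) ≤ τ/(p+q) < (κ+1)/(2κ+3)`. -/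
def IsKappa (p q τ κ : ℕ) : Prop :=
  κ * (p + q) ≤ (2 * κ + 1) * τ ∧ (2 * κ + 3) * τ < (κ + 1) * (p + q)

/-!
For `c` coprime to an odd `n > 1`, the inverse of `c` modulo `n` has a representative `s` with
`0 < s < n`, and exactly one of `s`, `n - s` lies strictly below `n / 2`; it solves `c t ≡ ±1`.
Two such solutions `a, b` would give `n ∣ c (a - b)` or `n ∣ c (a + b)`, hence `n ∣ a - b` or
`n ∣ a + b`, which the bounds `0 < 2a, 2b < n` force to be `a = b`. For `n = p + q` and `c = 2p`,
coprimality and oddness of `n` both come from `gcd p q = 1` and `2 ∣ p q`.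
-/

namespace Int

variable {n c : ℤ}

theorem eq_of_isCoprime_of_dvd_mul_sub (hc : IsCoprime c n) {a b : ℤ} (h : n ∣ c * (a - b))
    (ha : 0 ≤ a) (hb : 0 ≤ b) (ha' : 2 * a < n) (hb' : 2 * b < n) : a = b :=
  sub_eq_zero.mp <| eq_zero_of_abs_lt_dvd (hc.symm.dvd_of_dvd_mul_left h)
    (abs_sub_lt_iff.mpr ⟨by omega, by omega⟩)

theorem not_dvd_mul_add_of_isCoprime (hc : IsCoprime c n) {a b : ℤ} (ha : 0 < a) (hb : 0 < b)
    (ha' : 2 * a < n) (hb' : 2 * b < n) : ¬n ∣ c * (a + b) := fun h =>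
  have := le_of_dvd (by omega) (hc.symm.dvd_of_dvd_mul_left h)
  by omega

theorem eq_of_dvd_mul_sub_one_or_add_one (hc : IsCoprime c n) {a b : ℤ}
    (ha : 0 < 2 * a) (ha' : 2 * a < n) (hb : 0 < 2 * b) (hb' : 2 * b < n)
    (hac : n ∣ c * a - 1 ∨ n ∣ c * a + 1) (hbc : n ∣ c * b - 1 ∨ n ∣ c * b + 1) : a = b := by
  have hsub {x : ℤ} (hx : n ∣ c * a + x) (hy : n ∣ c * b + x) : a = b := by
    refine eq_of_isCoprime_of_dvd_mul_sub hc ?_ (by omega) (by omega) ha' hb'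
    rw [show c * (a - b) = c * a + x - (c * b + x) by ring]
    exact dvd_sub hx hy
  have hadd {x : ℤ} (hx : n ∣ c * a + x) (hy : n ∣ c * b - x) : a = b := by
    refine absurd ?_ (not_dvd_mul_add_of_isCoprime hc (by omega) (by omega) ha' hb')
    rw [show c * (a + b) = c * a + x + (c * b - x) by ring]
    exact dvd_add hx hy
  rcases hac with hac | hac <;> rcases hbc with hbc | hbc
  · exact hsub (x := -1) hac hbc
  · exact hadd (x := -1) hac (by simpa using hbc)
  · exact hadd (x := 1) hac hbc
  · exact hsub (x := 1) hac hbc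

theorem exists_dvd_mul_sub_one_or_add_one (hn : Odd n) (hn1 : 1 < n) (hc : IsCoprime c n) :
    ∃ t : ℤ, 0 < 2 * t ∧ 2 * t < n ∧ (n ∣ c * t - 1 ∨ n ∣ c * t + 1) := by
  obtain ⟨u, v, huv⟩ := hc
  obtain ⟨k, rfl⟩ := hn
  set s := u % (2 * k + 1) with hs
  have hs0 : 0 ≤ s := emod_nonneg _ (by omega)
  have hsn : s < 2 * k + 1 := emod_lt_of_pos _ (by omega)
  have hdvd : 2 * k + 1 ∣ c * s - 1 :=
    ⟨-v - c * (u / (2 * k + 1)), by rw [hs, emod_def]; linear_combination huv⟩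
  have hs_ne : s ≠ 0 := by
    rintro hzero
    have := le_of_dvd one_pos (by simpa [hzero] using hdvd)
    omega
  rcases lt_or_gt_of_ne (show 2 * s ≠ 2 * k + 1 by omega) with hlt | hgt
  · exact ⟨s, by omega, hlt, .inl hdvd⟩
  · refine ⟨2 * k + 1 - s, by omega, by omega, .inr ?_⟩
    rw [show c * (2 * k + 1 - s) + 1 = (2 * k + 1) * c - (c * s - 1) by ring]
    exact (dvd_mul_right _ c).sub hdvd

end Int

theorem Nat.existsUnique_dvd_mul_sub_one_or_add_one {n : ℕ} {c : ℤ} (hn : Odd n)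
    (hn1 : 1 < n) (hc : IsCoprime c n) :
    ∃! t : ℕ, 0 < 2 * t ∧ 2 * t < n ∧ ((n : ℤ) ∣ c * t - 1 ∨ (n : ℤ) ∣ c * t + 1) := by
  obtain ⟨t, ht0, htn, ht⟩ :=
    Int.exists_dvd_mul_sub_one_or_add_one hn.natCast (by exact_mod_cast hn1) hc
  lift t to ℕ using by omega
  refine ⟨t, ⟨by omega, by omega, ht⟩, fun s ⟨hs0, hsn, hs⟩ => ?_⟩
  exact_mod_cast Int.eq_of_dvd_mul_sub_one_or_add_one hc (by omega) (by omega) ht0 htn hs ht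

theorem Nat.Coprime.odd_add_of_even_mul {p q : ℕ} (hcop : Nat.Coprime p q)
    (heven : Even (p * q)) : Odd (p + q) := by
  have hboth : ¬(2 ∣ p ∧ 2 ∣ q) := fun ⟨hp, hq⟩ => by
    have := Nat.dvd_gcd hp hq
    rw [hcop.gcd_eq_one] at this
    omega
  rw [Nat.even_mul, Nat.even_iff, Nat.even_iff] at heven
  rw [Nat.odd_iff]
  omega

/-- existence and uniqueness of the tune. -/
theorem tune_existsUnique (p q : ℕ) (hcop : Nat.Coprime p q) (hp : 0 < p)
    (hpq : p < q) (heven : Even (p * q)) :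
    ∃! τ : ℕ, 0 < 2 * τ ∧ 2 * τ < p + q ∧
      (((p : ℤ) + q) ∣ 2 * p * τ - 1 ∨ ((p : ℤ) + q) ∣ 2 * p * τ + 1) := by
  have hodd : Odd (p + q) := hcop.odd_add_of_even_mul heven
  have hcop' : Nat.Coprime (2 * p) (p + q) :=
    Nat.Coprime.mul_left (Nat.coprime_two_left.mpr hodd) (Nat.coprime_self_add_right.mpr hcop)
  simpa only [Nat.cast_add, Nat.cast_mul, Nat.cast_ofNat] using
    Nat.existsUnique_dvd_mul_sub_one_or_add_one hodd (by omega)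
      (Nat.isCoprime_iff_coprime.mpr hcop')
end

section
/- Let p/q be an even rational parameter. Then there exists exactly one pair (p', q') of coprime nonnegative integers with p' < q', p'q' even, |pq' − qp'| = 1, and p' + q' < p + q. -/
set_option maxHeartbeats 1000000

/-- For coprime `a b`, if `a*b` is even then `a+b` is odd. -/
lemma odd_sum_of_cop_even' (a b : ℕ) (hc : Nat.Coprime a b) (he : Even (a * b)) :
    (a + b) % 2 = 1 := by
  have h1 : a % 2 = 0 ∨ b % 2 = 0 := by
    rcases Nat.even_mul.mp he with h | h
    · exact Or.inl (Nat.even_iff.mp h)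
    · exact Or.inr (Nat.even_iff.mp h)
  have h2 : ¬ (a % 2 = 0 ∧ b % 2 = 0) := by
    rintro ⟨ha, hb⟩
    have := Nat.dvd_gcd (Nat.dvd_of_mod_eq_zero ha) (Nat.dvd_of_mod_eq_zero hb)
    rw [Nat.Coprime.gcd_eq_one hc] at this
    omega
  omega

lemma even_mul_of_odd_sum' (a b : ℕ) (hs : (a + b) % 2 = 1) : Even (a * b) := by
  have h : a % 2 = 0 ∨ b % 2 = 0 := by omega
  rcases h with h | h
  · exact Nat.even_mul.mpr (Or.inl (Nat.even_iff.mpr h))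
  · exact Nat.even_mul.mpr (Or.inr (Nat.even_iff.mpr h))

/-- Uniqueness of the even predecessor. -/
lemma evenPred_unique' (p q : ℕ) (hcop : Nat.Coprime p q) (hp : 0 < p) (hpq : p < q)
    (hsum : (p + q) % 2 = 1) (a b c d : ℕ)
    (h1 : IsEvenPred p q a b) (h2 : IsEvenPred p q c d) : (a, b) = (c, d) := by
  obtain ⟨hc1, hlt1, he1, hn1, hs1⟩ := h1
  obtain ⟨hc2, hlt2, he2, hn2, hs2⟩ := h2
  have hq0 : (0:ℤ) < q := by exact_mod_cast Nat.lt_of_lt_of_le hp hpq.le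
  have hp1 : (1:ℤ) ≤ p := by exact_mod_cast hp
  have hpq' : (p:ℤ) < q := by exact_mod_cast hpq
  have e1 : (p:ℤ) * b - q * a = 1 ∨ (p:ℤ) * b - q * a = -1 := by
    rcases Int.natAbs_eq_iff.mp hn1 with h | h
    · exact Or.inl (by exact_mod_cast h)
    · exact Or.inr (by exact_mod_cast h)
  have e2 : (p:ℤ) * d - q * c = 1 ∨ (p:ℤ) * d - q * c = -1 := by
    rcases Int.natAbs_eq_iff.mp hn2 with h | h
    · exact Or.inl (by exact_mod_cast h)
    · exact Or.inr (by exact_mod_cast h)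
  have hab : (a:ℤ) + b < p + q := by exact_mod_cast hs1
  have hcd : (c:ℤ) + d < p + q := by exact_mod_cast hs2
  have hab' : (a:ℤ) < b := by exact_mod_cast hlt1
  have hcd' : (c:ℤ) < d := by exact_mod_cast hlt2
  have ha0 : (0:ℤ) ≤ a := Int.natCast_nonneg a
  have hc0 : (0:ℤ) ≤ c := Int.natCast_nonneg c
  have hbq : (b:ℤ) < q := by
    by_contra hb
    push_neg at hb
    have hap : (a:ℤ) ≤ p - 1 := by linarith
    have h1' : (q:ℤ) * a ≤ q * (p - 1) := mul_le_mul_of_nonneg_left hap hq0.le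
    have h2' : (p:ℤ) * q ≤ p * b := mul_le_mul_of_nonneg_left hb (by linarith)
    rcases e1 with e | e <;> linarith
  have hdq : (d:ℤ) < q := by
    by_contra hd
    push_neg at hd
    have hcp : (c:ℤ) ≤ p - 1 := by linarith
    have h1' : (q:ℤ) * c ≤ q * (p - 1) := mul_le_mul_of_nonneg_left hcp hq0.le
    have h2' : (p:ℤ) * q ≤ p * d := mul_le_mul_of_nonneg_left hd (by linarith)
    rcases e2 with e | e <;> linarith
  have hodd1 : (a + b) % 2 = 1 := odd_sum_of_cop_even' a b hc1 he1
  have hodd2 : (c + d) % 2 = 1 := odd_sum_of_cop_even' c d hc2 he2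
  have hqp : IsCoprime (q:ℤ) (p:ℤ) := Nat.isCoprime_iff_coprime.mpr hcop.symm
  have same : ∀ e : ℤ, (p:ℤ) * b - q * a = e → (p:ℤ) * d - q * c = e → (a, b) = (c, d) := by
    intro e hea heb
    have hdvd : (q:ℤ) ∣ p * ((b:ℤ) - d) := ⟨(a:ℤ) - c, by linarith⟩
    obtain ⟨k, hk⟩ := hqp.dvd_of_dvd_mul_left hdvd
    have hk0 : k = 0 := by
      rcases lt_trichotomy k 0 with h | h | h
      · have : (q:ℤ) * k ≤ q * (-1) := mul_le_mul_of_nonneg_left (by linarith) hq0.le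
        linarith
      · exact h
      · have : (q:ℤ) * 1 ≤ q * k := mul_le_mul_of_nonneg_left (by linarith) hq0.le
        linarith
    rw [hk0, mul_zero] at hk
    have hbd : b = d := by omega
    subst hbd
    have hac : (a:ℤ) = c := by
      have h : (q:ℤ) * a = q * c := by linarith
      exact mul_left_cancel₀ (ne_of_gt hq0) h
    have : a = c := by exact_mod_cast hac
    simp [this]
  have diff : ∀ (_ : (p:ℤ) * b - q * a = 1) (_ : (p:ℤ) * d - q * c = -1), False := by
    intro ea eb
    have hdvd : (q:ℤ) ∣ p * ((b:ℤ) + d) := ⟨(a:ℤ) + c, by linarith⟩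
    obtain ⟨k, hk⟩ := hqp.dvd_of_dvd_mul_left hdvd
    have hb1 : (1:ℤ) ≤ b := by linarith
    have hd1 : (1:ℤ) ≤ d := by linarith
    have hk1 : k = 1 := by
      rcases lt_trichotomy k 1 with h | h | h
      · have : (q:ℤ) * k ≤ q * 0 := mul_le_mul_of_nonneg_left (by linarith) hq0.le
        linarith
      · exact h
      · have : (q:ℤ) * 2 ≤ q * k := mul_le_mul_of_nonneg_left (by linarith) hq0.le
        linarith
    rw [hk1, mul_one] at hk
    have hbdq : b + d = q := by omega
    have hacp : a + c = p := by
      have h : (q:ℤ) * ((a:ℤ) + c) = q * p := by linear_combination (p:ℤ) * hk - ea - eb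
      have h' : (a:ℤ) + c = p := mul_left_cancel₀ (ne_of_gt hq0) h
      omega
    omega
  have diff2 : ∀ (_ : (p:ℤ) * d - q * c = 1) (_ : (p:ℤ) * b - q * a = -1), False := by
    intro ea eb
    have hdvd : (q:ℤ) ∣ p * ((b:ℤ) + d) := ⟨(a:ℤ) + c, by linarith⟩
    obtain ⟨k, hk⟩ := hqp.dvd_of_dvd_mul_left hdvd
    have hb1 : (1:ℤ) ≤ b := by linarith
    have hd1 : (1:ℤ) ≤ d := by linarith
    have hk1 : k = 1 := by
      rcases lt_trichotomy k 1 with h | h | h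
      · have : (q:ℤ) * k ≤ q * 0 := mul_le_mul_of_nonneg_left (by linarith) hq0.le
        linarith
      · exact h
      · have : (q:ℤ) * 2 ≤ q * k := mul_le_mul_of_nonneg_left (by linarith) hq0.le
        linarith
    rw [hk1, mul_one] at hk
    have hbdq : b + d = q := by omega
    have hacp : a + c = p := by
      have h : (q:ℤ) * ((a:ℤ) + c) = q * p := by linear_combination (p:ℤ) * hk - ea - eb
      have h' : (a:ℤ) + c = p := mul_left_cancel₀ (ne_of_gt hq0) h
      omega
    omega
  rcases e1 with ea | ea <;> rcases e2 with eb | eb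
  · exact same 1 ea eb
  · exact absurd (diff ea eb) not_false
  · exact absurd (diff2 eb ea) not_false
  · exact same (-1) ea eb

/-- Existence of the even predecessor. -/
lemma evenPred_exists' (p q : ℕ) (hcop : Nat.Coprime p q) (hp : 0 < p) (hpq : p < q)
    (hsum : (p + q) % 2 = 1) : ∃ a b : ℕ, IsEvenPred p q a b := by
  have hq0 : (0:ℤ) < q := by exact_mod_cast Nat.lt_of_lt_of_le hp hpq.le
  have hp1 : (1:ℤ) ≤ p := by exact_mod_cast hp
  have hpq' : (p:ℤ) < q := by exact_mod_cast hpq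
  obtain ⟨a, b, heq, ha0, hab, hbq, hap⟩ :
      ∃ a b : ℤ, (p:ℤ) * b - q * a = 1 ∧ 0 ≤ a ∧ a < b ∧ b < q ∧ a < p := by
    have hg : (p:ℤ) * Nat.gcdA p q + q * Nat.gcdB p q = 1 := by
      have h1 := Nat.gcd_eq_gcd_ab p q
      rw [Nat.Coprime.gcd_eq_one hcop] at h1
      push_cast at h1
      linarith
    set A := Nat.gcdA p q with hA
    set B := Nat.gcdB p q with hB
    refine ⟨-B - p * (A / q), A % q, ?_, ?_, ?_, ?_, ?_⟩
    all_goals {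
      have hemod : A % q = A - q * (A / q) := by rw [Int.emod_def]
      have hb0 : 0 ≤ A % q := Int.emod_nonneg A (by positivity)
      have hbq : A % q < q := Int.emod_lt_of_pos A hq0
      have heq : (p:ℤ) * (A % q) - q * (-B - p * (A / q)) = 1 := by
        rw [hemod]; ring_nf; linarith [hg]
      have hb1 : 1 ≤ A % q := by
        rcases eq_or_lt_of_le hb0 with h | h
        · exfalso
          have hd : (q:ℤ) ∣ 1 := ⟨-(-B - p * (A / q)), by rw [← heq, ← h]; ring⟩
          have := Int.le_of_dvd one_pos hd
          linarith
        · linarith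
      first
      | exact heq
      | nlinarith [heq, hb1, hbq, hq0, hp1, hpq']
    }
  set a' : ℕ := a.toNat with ha'
  set b' : ℕ := b.toNat with hb'
  have ca : (a' : ℤ) = a := Int.toNat_of_nonneg ha0
  have cb : (b' : ℤ) = b := Int.toNat_of_nonneg (by linarith)
  have ha'p : a' < p := by omega
  have hb'q : b' < q := by omega
  have ha'b' : a' < b' := by omega
  by_cases hpar : (a' + b') % 2 = 1
  · refine ⟨a', b', ?_, ha'b', even_mul_of_odd_sum' a' b' hpar, ?_, by omega⟩
    · exact Nat.isCoprime_iff_coprime.mp ⟨-(q:ℤ), (p:ℤ), by rw [ca, cb]; ring_nf; linarith [heq]⟩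
    · have : (p:ℤ) * b' - q * a' = 1 := by rw [ca, cb]; exact heq
      rw [this]
      rfl
  · have hb'1 : 1 ≤ b' := by omega
    set c : ℕ := p - a' with hc
    set d : ℕ := q - b' with hd
    have cc : (c : ℤ) = p - a := by push_cast [hc, Nat.cast_sub ha'p.le]; omega
    have cd : (d : ℤ) = q - b := by push_cast [hd, Nat.cast_sub hb'q.le]; omega
    have heq2 : (p:ℤ) * d - q * c = -1 := by
      rw [cc, cd]; linear_combination -heq
    have hparcd : (c + d) % 2 = 1 := by omega
    have hc1 : 1 ≤ c := by omega
    have hd1 : 1 ≤ d := by omega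
    have hcd : c < d := by
      have hle : (c:ℤ) ≤ d := by
        have h1' : (q:ℤ) * c = p * d + 1 := by linarith
        have hd1' : (1:ℤ) ≤ d := by exact_mod_cast hd1
        nlinarith [h1', hd1', hpq', hq0]
      have hne : c ≠ d := by
        intro hcd'
        have hcd'' : (c:ℤ) = d := by exact_mod_cast hcd'
        have h1' : (c:ℤ) * ((q:ℤ) - p) = 1 := by linear_combination -heq2 - (p:ℤ) * hcd''
        have hqp1 : (1:ℤ) ≤ (q:ℤ) - p := by linarith
        have hcle : (c:ℤ) * 1 ≤ (c:ℤ) * ((q:ℤ) - p) :=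
          mul_le_mul_of_nonneg_left hqp1 (by positivity)
        have hceq : c = 1 := by omega
        omega
      omega
    refine ⟨c, d, ?_, hcd, even_mul_of_odd_sum' c d hparcd, ?_, by omega⟩
    · exact Nat.isCoprime_iff_coprime.mp ⟨(q:ℤ), -(p:ℤ), by ring_nf; linarith [heq2]⟩
    · rw [heq2]; rfl

/-- existence and uniqueness of the even predecessor. -/
theorem evenPred_existsUnique (p q : ℕ) (h : EvenParam p q) :
    ∃! pq' : ℕ × ℕ, IsEvenPred p q pq'.1 pq'.2 := by
  obtain ⟨hcop, hp, hpq, heven⟩ := h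
  have hsum : (p + q) % 2 = 1 := odd_sum_of_cop_even' p q hcop heven
  obtain ⟨a, b, hab⟩ := evenPred_exists' p q hcop hp hpq hsum
  refine ⟨(a, b), hab, ?_⟩
  rintro ⟨c, d⟩ hcd
  exact evenPred_unique' p q hcop hp hpq hsum c d a b hcd hab
end

section
/- Let p/q be an even rational parameter with tune τ and even predecessor p'/q'. Then p' + q' = (p + q) − 2τ. -/
lemma Nat.odd_add_of_coprime_of_even_mul {m n : ℕ} (hmn : m.Coprime n) (he : Even (m * n)) :
    Odd (m + n) := by
  have not_both : ¬ (Even m ∧ Even n) := fun ⟨hm, hn⟩ =>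
    absurd (Nat.eq_one_of_dvd_coprimes hmn hm.two_dvd hn.two_dvd) (by norm_num)
  rcases Nat.even_mul.mp he with hm | hn
  · exact hm.add_odd (Nat.not_even_iff_odd.mp fun hn => not_both ⟨hm, hn⟩)
  · exact (Nat.not_even_iff_odd.mp fun hm => not_both ⟨hm, hn⟩).add_even hn

/-- `δ b` is an inverse of `p` modulo `n`. -/
lemma dvd_sub_mul_of_dvd_mul_sub {R : Type*} [CommRing R] {n p a b ε δ : R} (hδ : δ * δ = 1)
    (ha : n ∣ p * a - ε) (hb : n ∣ p * b - δ) : n ∣ a - ε * δ * b := by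
  rw [show a - ε * δ * b = δ * b * (p * a - ε) - δ * a * (p * b - δ) by
    linear_combination (-a) * hδ]
  exact dvd_sub (dvd_mul_of_dvd_right ha _) (dvd_mul_of_dvd_right hb _)

lemma Int.dvd_sub_or_dvd_add_of_mul_modEq_pm_one {n p a b : ℤ}
    (ha : n ∣ p * a - 1 ∨ n ∣ p * a + 1) (hb : n ∣ p * b - 1 ∨ n ∣ p * b + 1) :
    n ∣ a - b ∨ n ∣ a + b := by
  rw [← sub_neg_eq_add] at ha hb
  rcases ha with ha | ha <;> rcases hb with hb | hb
  · left; simpa using dvd_sub_mul_of_dvd_mul_sub (by norm_num) ha hb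
  · right; simpa using dvd_sub_mul_of_dvd_mul_sub (by norm_num) ha hb
  · right; simpa using dvd_sub_mul_of_dvd_mul_sub (by norm_num) ha hb
  · left; simpa using dvd_sub_mul_of_dvd_mul_sub (by norm_num) ha hb

lemma Int.add_eq_of_dvd_sub_or_dvd_add {n a b : ℤ} (h : n ∣ a - b ∨ n ∣ a + b)
    (ha₀ : 0 < a) (ha : a < n) (hb₀ : 0 < b) (hb : b < n) (hab : a ≠ b) : a + b = n := by
  rcases h with h | h
  · exact absurd (sub_eq_zero.mp (Int.eq_zero_of_abs_lt_dvd h (by rw [abs_lt]; omega))) hab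
  · have : n ∣ a + b - n := dvd_sub h dvd_rfl
    exact sub_eq_zero.mp (Int.eq_zero_of_abs_lt_dvd this (by rw [abs_lt]; omega))

theorem evenPred_omega_general (p q τ p' q' : ℕ)
    (hτ : IsTune p q τ) (hpred : IsEvenPred p q p' q') :
    ((p' : ℤ) + q') = ((p : ℤ) + q) - 2 * τ := by
  obtain ⟨hτ₀, hτω, htune⟩ := hτ
  obtain ⟨hcop, -, heven, hdet, hlt⟩ := hpred
  obtain ⟨k, hk⟩ := Nat.odd_add_of_coprime_of_even_mul hcop heven
  have hpred_congr : ((p : ℤ) + q) ∣ p * (p' + q') - 1 ∨ ((p : ℤ) + q) ∣ p * (p' + q') + 1 := by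
    have hω : ((p : ℤ) + q) ∣ p * (p' + q') - (p * q' - q * p') := ⟨p', by ring⟩
    rcases Int.natAbs_eq_iff.mp hdet with hd | hd <;> rw [hd] at hω
    · exact .inl (by simpa using hω)
    · exact .inr (by simpa using hω)
  have htune_congr : ((p : ℤ) + q) ∣ p * (2 * τ) - 1 ∨ ((p : ℤ) + q) ∣ p * (2 * τ) + 1 := by
    simpa only [mul_left_comm (p : ℤ) 2, mul_assoc] using htune
  have hsum := Int.add_eq_of_dvd_sub_or_dvd_add
    (Int.dvd_sub_or_dvd_add_of_mul_modEq_pm_one hpred_congr htune_congr)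
    (by omega) (by omega) (by omega) (by omega) (by omega)
  omega

/-- the even predecessor satisfies ω' = ω - 2τ. -/
theorem evenPred_omega (p q τ p' q' : ℕ) (h : EvenParam p q)
    (hτ : IsTune p q τ) (hpred : IsEvenPred p q p' q') :
    ((p' : ℤ) + q') = ((p : ℤ) + q) - 2 * τ :=
  evenPred_omega_general p q τ p' q' hτ hpred
end

section
/- Let p/q be an even rational parameter with tune τ, let ε ∈ {1, −1} be such that 2pτ ≡ ε (mod ω), and set θ = (2pτ − ε)/ω. Then the even predecessor p'/q' of p/q is given by p' = p − θ and q' = q − 2τ + θ. -/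
lemma aux_unique (p q p' q' : ℕ) (a b : ℤ) (hp0 : 0 < p) (hq0 : 0 < q)
    (hcop : Nat.Coprime p q)
    (hdet : (p : ℤ) * q' - (q : ℤ) * p' = (p : ℤ) * b - (q : ℤ) * a)
    (hs1 : 0 < a + b) (hs2 : a + b < (p : ℤ) + q)
    (h1 : 0 < p' + q') (h2 : p' + q' < p + q) :
    (p' : ℤ) = a ∧ (q' : ℤ) = b := by
  have hcopZ : IsCoprime (q : ℤ) (p : ℤ) :=
    Nat.isCoprime_iff_coprime.mpr hcop.symm
  have hdvd : (q : ℤ) ∣ ((q' : ℤ) - b) := by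
    apply hcopZ.dvd_of_dvd_mul_left
    exact ⟨(p' : ℤ) - a, by linear_combination hdet⟩
  obtain ⟨k, hk⟩ := hdvd
  have hqne : (q : ℤ) ≠ 0 := by exact_mod_cast hq0.ne'
  have hk2 : (p' : ℤ) - a = k * p := by
    have : (q : ℤ) * ((p' : ℤ) - a) = (q : ℤ) * (k * p) := by
      linear_combination -hdet + (p : ℤ) * hk
    exact mul_left_cancel₀ hqne this
  -- sums
  have hsum : (p' : ℤ) + q' = (a + b) + k * ((p : ℤ) + q) := by
    linear_combination hk + hk2
  have hω : (0 : ℤ) < (p : ℤ) + q := by positivity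
  have h1' : (0 : ℤ) < (p' : ℤ) + q' := by exact_mod_cast h1
  have h2' : ((p' : ℤ) + q') < (p : ℤ) + q := by exact_mod_cast h2
  have hk0 : k = 0 := by
    rcases lt_trichotomy k 0 with h | h | h
    · have : k * ((p : ℤ) + q) ≤ -1 * ((p : ℤ) + q) :=
        mul_le_mul_of_nonneg_right (by omega) hω.le
      linarith
    · exact h
    · have : 1 * ((p : ℤ) + q) ≤ k * ((p : ℤ) + q) :=
        mul_le_mul_of_nonneg_right (by omega) hω.le
      linarith
  subst hk0
  constructor <;> linarith [hk, hk2]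

/-- formula for the even predecessor in terms of the tune. -/
theorem evenPred_formula (p q τ p' q' : ℕ) (ε θ : ℤ) (h : EvenParam p q)
    (hτ : IsTune p q τ) (hε : ε = 1 ∨ ε = -1)
    (hθ : θ * ((p : ℤ) + q) = 2 * p * τ - ε)
    (hpred : IsEvenPred p q p' q') :
    (p' : ℤ) = p - θ ∧ (q' : ℤ) = q - 2 * τ + θ := by
  obtain ⟨hcop, hp0, hpq, hev⟩ := h
  obtain ⟨hτ0, hτω, -⟩ := hτ
  obtain ⟨hcop', hlt', hev', hdet, hsum⟩ := hpred
  have hq0 : 0 < q := lt_trans hp0 hpq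
  -- θ is odd
  have hωodd : ¬ (2 ∣ p ∧ 2 ∣ q) := by
    rintro ⟨h2p, h2q⟩
    have := Nat.dvd_gcd h2p h2q
    rw [hcop] at this
    omega
  have hθodd : Odd θ := by
    have hOdd : Odd (θ * ((p : ℤ) + q)) := by
      rw [hθ]
      rcases hε with rfl | rfl
      · exact ⟨(p : ℤ) * τ - 1, by ring⟩
      · exact ⟨(p : ℤ) * τ, by ring⟩
    exact (Int.odd_mul.mp hOdd).1
  -- determinant cases
  have hδ : (p : ℤ) * q' - (q : ℤ) * p' = 1 ∨ (p : ℤ) * q' - (q : ℤ) * p' = -1 := by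
    rcases Int.natAbs_eq_iff.mp hdet with h | h
    · left; exact_mod_cast h
    · right; exact_mod_cast h
  have h1 : 0 < p' + q' := by omega
  have hτ0' : (0 : ℤ) < 2 * τ := by exact_mod_cast hτ0
  have hτω' : (2 : ℤ) * τ < (p : ℤ) + q := by exact_mod_cast hτω
  have hεD : (p : ℤ) * q' - (q : ℤ) * p' = -ε ∨ (p : ℤ) * q' - (q : ℤ) * p' = ε := by
    rcases hδ with h | h <;> rcases hε with rfl | rfl <;> simp [h]
  rcases hεD with hD | hD
  · -- matches the candidate (p - θ, q - 2τ + θ)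
    exact aux_unique p q p' q' ((p : ℤ) - θ) ((q : ℤ) - 2 * τ + θ) hp0 hq0 hcop
      (by linear_combination hD - hθ) (by linarith) (by linarith)
      h1 hsum
  · -- predecessor would be (θ, 2τ - θ): parity contradiction
    exfalso
    obtain ⟨e1, e2⟩ := aux_unique p q p' q' θ (2 * τ - θ) hp0 hq0 hcop
      (by linear_combination hD + hθ) (by linarith) (by linarith)
      h1 hsum
    have o1 : Odd (p' : ℤ) := e1 ▸ hθodd
    have o2 : Odd (q' : ℤ) := by
      rw [e2]
      obtain ⟨m, hm⟩ := hθodd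
      exact ⟨(τ : ℤ) - m - 1, by omega⟩
    have : Odd ((p' : ℤ) * q') := o1.mul o2
    rw [show ((p' : ℤ) * q') = ((p' * q' : ℕ) : ℤ) by push_cast; ring, Int.odd_coe_nat] at this
    exact (Nat.not_odd_iff_even.mpr hev') this
end

section
/- Let p/q be an even rational parameter with p ≥ 2, with even predecessor p'/q' and with κ = κ(p/q). Then 2κp' < p and 2κq' < q; moreover, setting p̂ = p − 2κp' and q̂ = q − 2κq', the integers p̂ and q̂ are coprime, p̂q̂ is even, and 0 < p̂ < q̂ (so the core predecessor p̂/q̂ is again an even rational parameter). -/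
/-!
Write `ω = p + q` and `e = pq' - qp' = ±1`. Since `p(p' + q') = e + p'ω`, the tune condition
`2pτ ≡ ±1 (mod ω)` becomes, after cancelling the unit `p`, `2τ ≡ ±(p' + q') (mod ω)`; as `2τ` is even,
`p' + q'` is odd and both lie in `(0, ω)`, this forces `2τ + p' + q' = ω`. The lower bound on `τ/ω`
defining `κ` then reads `(2κ + 1)(p' + q') ≤ ω`, i.e. `p̂ + q̂ ≥ p' + q'`, while the determinant
`p̂q' - q̂p' = e` is unchanged. A pair with these two properties satisfies `0 < p̂ < q̂`, coprimality
follows from the determinant, and `p̂ + q̂ ≡ p + q (mod 2)` is odd.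
-/

theorem Nat.Coprime.odd_add_of_even_mul_s4 {m n : ℕ} (h : m.Coprime n) (he : Even (m * n)) :
    Odd (m + n) := by
  have hnot : ¬ (Even m ∧ Even n) := fun ⟨hm, hn⟩ => by
    simpa [h] using Nat.dvd_gcd hm.two_dvd hn.two_dvd
  rcases Nat.even_mul.mp he with hm | hn <;> grind

theorem Nat.even_mul_of_odd_add {m n : ℕ} (h : Odd (m + n)) : Even (m * n) := by
  rw [Nat.odd_add] at h
  rcases Nat.even_or_odd m with hm | hm
  · exact hm.mul_right n
  · exact (h.mp hm).mul_left m

theorem Int.isCoprime_of_natAbs_mul_sub_eq_one {A B a b : ℤ} (h : (A * b - B * a).natAbs = 1) :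
    IsCoprime A B := by
  rcases Int.natAbs_eq_iff.mp h with h | h
  · exact ⟨b, -a, by linear_combination h⟩
  · exact ⟨-b, a, by linear_combination -h⟩

theorem Int.pos_and_lt_of_natAbs_mul_sub_eq_one {A B a b : ℤ} (h : (A * b - B * a).natAbs = 1)
    (ha : 0 < a) (hab : a < b) (hsum : a + b ≤ A + B) : 0 < A ∧ A < B := by
  have hdet : |A * b - B * a| ≤ 1 := by rw [Int.abs_eq_natAbs, h]; rfl
  rw [abs_le] at hdet
  -- `A ≤ 0` would give `B ≥ a + b`, so `Ab - Ba ≤ -(a + b)a ≤ -3`; `A ≥ B` would give `A ≥ 2`,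
  -- so `Ab - Ba = A(b - a) + a(A - B) ≥ 2`.
  constructor
  · by_contra! hA
    nlinarith
  · by_contra! hBA
    nlinarith

theorem Int.dvd_sub_or_dvd_add_of_natAbs_mul_sub_eq_one {p q t a b : ℤ} (hcop : IsCoprime p q)
    (ht : p + q ∣ p * t - 1 ∨ p + q ∣ p * t + 1) (hdet : (p * b - q * a).natAbs = 1) :
    p + q ∣ t - (a + b) ∨ p + q ∣ t + (a + b) := by
  have hω : IsCoprime (p + q) p := by simpa [add_comm] using hcop.symm.add_mul_left_left 1
  have hs : p + q ∣ p * (a + b) - (p * b - q * a) := ⟨a, by ring⟩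
  rcases ht with ht | ht <;> rcases Int.natAbs_eq_iff.mp hdet with he | he <;>
    rw [he, Nat.cast_one] at hs
  · left; apply hω.dvd_of_dvd_mul_left; convert dvd_sub ht hs using 1; ring
  · right; apply hω.dvd_of_dvd_mul_left; convert dvd_add ht hs using 1; ring
  · right; apply hω.dvd_of_dvd_mul_left; convert dvd_add ht hs using 1; ring
  · left; apply hω.dvd_of_dvd_mul_left; convert dvd_sub ht hs using 1; ring

theorem IsEvenPred.pos_left {p q p' q' : ℕ} (hp : 2 ≤ p) (h : IsEvenPred p q p' q') : 0 < p' := by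
  obtain ⟨hcop, -, -, hdet, -⟩ := h
  by_contra! h0
  obtain rfl : p' = 0 := by omega
  obtain rfl : q' = 1 := (Nat.coprime_zero_left q').mp hcop
  have hp1 : p = 1 := by simpa using hdet
  omega

theorem IsTune.two_mul_add_eq {p q τ p' q' : ℕ} (hτ : IsTune p q τ) (h : EvenParam p q)
    (hpred : IsEvenPred p q p' q') : 2 * τ + (p' + q') = p + q := by
  obtain ⟨hcop, -, -, -⟩ := h
  obtain ⟨hcop', -, hev', hdet, hlt⟩ := hpred
  obtain ⟨hτ0, hτω, htune⟩ := hτ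
  have htune' : ((p : ℤ) + q) ∣ p * ↑(2 * τ) - 1 ∨ ((p : ℤ) + q) ∣ p * ↑(2 * τ) + 1 := by
    push_cast; simpa only [mul_left_comm, mul_assoc] using htune
  rcases Int.dvd_sub_or_dvd_add_of_natAbs_mul_sub_eq_one (Nat.isCoprime_iff_coprime.mpr hcop)
    htune' hdet with hd | hd
  · have := Int.eq_zero_of_abs_lt_dvd hd (by rw [abs_lt]; push_cast; constructor <;> omega)
    obtain ⟨k, hk⟩ := hcop'.odd_add_of_even_mul_s4 hev'
    omega
  · have := Int.eq_zero_of_abs_lt_dvd (dvd_sub hd dvd_rfl)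
      (by rw [abs_lt]; push_cast; constructor <;> omega)
    omega

theorem IsKappa.mul_le {p q τ κ s : ℕ} (hκ : IsKappa p q τ κ) (hτ : 2 * τ + s = p + q) :
    (2 * κ + 1) * s ≤ p + q := by
  have := hκ.1
  nlinarith

/-- the core predecessor is again an even rational parameter. -/
theorem corePred_evenParam (p q τ κ p' q' : ℕ) (h : EvenParam p q) (hp2 : 2 ≤ p)
    (hτ : IsTune p q τ) (hκ : IsKappa p q τ κ)
    (hpred : IsEvenPred p q p' q') :
    2 * κ * p' < p ∧ 2 * κ * q' < q ∧
      Nat.Coprime (p - 2 * κ * p') (q - 2 * κ * q') ∧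
      Even ((p - 2 * κ * p') * (q - 2 * κ * q')) ∧
      0 < p - 2 * κ * p' ∧ p - 2 * κ * p' < q - 2 * κ * q' := by
  have hsum := hκ.mul_le (hτ.two_mul_add_eq h hpred)
  have hp' := hpred.pos_left hp2
  obtain ⟨hcop, -, -, hev⟩ := h
  obtain ⟨-, hpq', -, hdet, -⟩ := hpred
  have hdet' : (((p : ℤ) - 2 * κ * p') * q' - ((q : ℤ) - 2 * κ * q') * p').natAbs = 1 := by
    rw [← hdet]; ring_nf
  obtain ⟨hA, hAB⟩ := Int.pos_and_lt_of_natAbs_mul_sub_eq_one hdet' (by exact_mod_cast hp')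
    (by exact_mod_cast hpq') (by zify at hsum; linarith)
  have hlt_p : 2 * κ * p' < p := by zify; linarith
  have hlt_q : 2 * κ * q' < q := by zify; linarith
  refine ⟨hlt_p, hlt_q, ?_, Nat.even_mul_of_odd_add ?_, ?_, ?_⟩
  · rw [← Nat.isCoprime_iff_coprime]
    push_cast [hlt_p.le, hlt_q.le]
    exact Int.isCoprime_of_natAbs_mul_sub_eq_one hdet'
  · have hsplit : p + q = p - 2 * κ * p' + (q - 2 * κ * q') + 2 * (κ * (p' + q')) := by
      zify [hlt_p.le, hlt_q.le]; ring
    simpa [hsplit, parity_simps] using hcop.odd_add_of_even_mul_s4 hev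
  · zify [hlt_p.le]; exact hA
  · zify [hlt_p.le, hlt_q.le]; exact hAB
end

section
/- Let p/q be an even rational parameter with p ≥ 2, with even predecessor p'/q' and κ = κ(p/q). Then (2κ + 1)(p' + q') < p + q. -/
/-- (2κ+1)ω' < ω. -/
theorem kappa_omega_ineq (p q τ κ p' q' : ℕ) (h : EvenParam p q) (hp2 : 2 ≤ p)
    (hτ : IsTune p q τ) (hκ : IsKappa p q τ κ)
    (hpred : IsEvenPred p q p' q') :
    (2 * κ + 1) * (p' + q') < p + q := by
  obtain ⟨hcop, hp0, hpq, hev⟩ := h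
  obtain ⟨hτ0, hτω, hdvd⟩ := hτ
  obtain ⟨hκ1, hκ2⟩ := hκ
  obtain ⟨hcop', hpq', hev', hdet, hlt'⟩ := hpred
  set n : ℕ := p' + q' with hn
  -- n is odd
  have hnodd : Odd n := by
    rcases Nat.even_or_odd p' with hp' | hp'
    · have hq'o : Odd q' := by
        rcases Nat.even_or_odd q' with hq' | hq'
        · exfalso
          have h2 : 2 ∣ Nat.gcd p' q' := Nat.dvd_gcd hp'.two_dvd hq'.two_dvd
          rw [hcop'] at h2; omega
        · exact hq'
      exact hp'.add_odd hq'o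
    · have hq'e : Even q' := by
        rcases Nat.even_mul.mp hev' with h1 | h1
        · exact absurd h1 (Nat.not_even_iff_odd.mpr hp')
        · exact h1
      exact hp'.add_even hq'e
  -- the determinant ε
  set ε : ℤ := (p : ℤ) * q' - (q : ℤ) * p' with hε
  have hε1 : ε = 1 ∨ ε = -1 := by
    rcases Int.natAbs_eq ε with he | he <;> rw [hdet] at he <;> omega
  -- ω ∣ p * n - ε
  have hkey : ((p : ℤ) + q) ∣ (p : ℤ) * n - ε := by
    refine ⟨(p' : ℤ), ?_⟩
    push_cast [hn, hε]
    ring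
  clear_value n ε
  clear hε hev'
  have hεsq : ε * ε = 1 := by rcases hε1 with he | he <;> rw [he] <;> ring
  -- coprimality of ω and p over ℤ
  have hcop2 : IsCoprime ((p : ℤ) + q) (p : ℤ) := by
    have h1 : Nat.Coprime p (p + q) := by
      rw [Nat.add_comm]; exact Nat.coprime_add_self_right.mpr hcop
    have h2 : IsCoprime (p : ℤ) ((p : ℤ) + (q : ℤ)) := by
      have := Nat.isCoprime_iff_coprime.mpr h1
      push_cast at this
      exact this
    exact h2.symm
  -- from the tune: conclude 2τ + n = p + q
  have hmain : 2 * τ + n = p + q := by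
    have hδ : ∃ δ : ℤ, (δ = 1 ∨ δ = -1) ∧ ((p : ℤ) + q) ∣ 2 * p * τ - δ := by
      rcases hdvd with h1 | h1
      · exact ⟨1, Or.inl rfl, h1⟩
      · exact ⟨-1, Or.inr rfl, by simpa [sub_neg_eq_add] using h1⟩
    obtain ⟨δ, hδ1, hδd⟩ := hδ
    have hdiv : ((p : ℤ) + q) ∣ (p : ℤ) * (2 * τ - ε * δ * n) := by
      have heq : (p : ℤ) * (2 * τ - ε * δ * n) =
          (2 * p * τ - δ) - ε * δ * ((p : ℤ) * n - ε) + δ * (1 - ε * ε) := by ring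
      rw [heq, hεsq]
      simp only [sub_self, mul_zero, add_zero]
      exact dvd_sub hδd (Dvd.dvd.mul_left hkey (ε * δ))
    have hdiv2 : ((p : ℤ) + q) ∣ 2 * τ - ε * δ * n := hcop2.dvd_of_dvd_mul_left hdiv
    have hs : ε * δ = 1 ∨ ε * δ = -1 := by
      rcases hε1 with he | he <;> rcases hδ1 with hd | hd <;> rw [he, hd] <;> norm_num
    have hnlt : n < p + q := hlt'
    have hnpos : 0 < n := by omega
    rcases hs with hs | hs
    · -- 2τ = n : contradiction with parity
      exfalso
      rw [hs, one_mul] at hdiv2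
      have h0 : 2 * (τ : ℤ) - n = 0 := by
        refine Int.eq_zero_of_abs_lt_dvd hdiv2 ?_
        rw [abs_lt]
        constructor <;> push_cast <;> omega
      have : 2 * τ = n := by omega
      rcases hnodd with ⟨k, hk⟩
      omega
    · rw [hs] at hdiv2
      have hdiv3 : ((p : ℤ) + q) ∣ (2 * τ - -1 * n) - ((p : ℤ) + q) :=
        dvd_sub hdiv2 dvd_rfl
      have h0 : (2 * (τ : ℤ) + n) - ((p : ℤ) + q) = 0 := by
        have habs : |(2 * (τ : ℤ) - -1 * n) - ((p : ℤ) + q)| < (p : ℤ) + q := by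
          rw [abs_lt]
          constructor <;> push_cast <;> omega
        have := Int.eq_zero_of_abs_lt_dvd hdiv3 habs
        linarith [this]
      omega
  -- from κ inequality: (2κ+1)n ≤ p+q
  have hle : (2 * κ + 1) * n ≤ p + q := by
    have h2 : 2 * (κ * (p + q)) ≤ 2 * ((2 * κ + 1) * τ) := Nat.mul_le_mul le_rfl hκ1
    have h3 : (2 * κ + 1) * (2 * τ) + (2 * κ + 1) * n = (2 * κ + 1) * (p + q) := by
      rw [← Nat.left_distrib, hmain]
    have h4 : (2 * κ + 1) * (p + q) = 2 * (κ * (p + q)) + (p + q) := by ring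
    have h5 : (2 * κ + 1) * (2 * τ) = 2 * ((2 * κ + 1) * τ) := by ring
    linarith
  -- strictness
  rcases lt_or_eq_of_le hle with hlt | heq
  · exact hlt
  · exfalso
    have hnd : (n : ℤ) ∣ ((p : ℤ) + q) := by
      refine ⟨((2 * κ + 1 : ℕ) : ℤ), ?_⟩
      have hh : ((2 * κ + 1 : ℕ) : ℤ) * (n : ℤ) = (p : ℤ) + q := by exact_mod_cast heq
      linarith
    have hdε : (n : ℤ) ∣ ε := by
      have h1 : (n : ℤ) ∣ (p : ℤ) * n - ε := dvd_trans hnd hkey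
      have h2 : (n : ℤ) ∣ (p : ℤ) * n := dvd_mul_left _ _
      simpa using dvd_sub h2 h1
    have hn1 : n = 1 := by
      have h1 : (n : ℤ) ∣ 1 := by
        rcases hε1 with he | he
        · exact he ▸ hdε
        · exact dvd_neg.mp (he ▸ hdε)
      have h2 := Int.le_of_dvd one_pos h1
      have h3 : 0 < n := by omega
      omega
    rw [hn1] at hkey
    push_cast at hkey
    have h0 : (p : ℤ) - ε = 0 := by
      refine Int.eq_zero_of_abs_lt_dvd (by simpa using hkey) ?_
      rw [abs_lt]
      rcases hε1 with he | he <;> rw [he] <;> constructor <;> push_cast <;> omega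
    rcases hε1 with he | he <;> rw [he] at h0 <;> omega
end

section
/- Let p/q be an even rational parameter with p ≥ 2, tune τ, even predecessor p'/q' (with ω' = p' + q' and tune τ'), and κ = κ(p/q). Then either τ − τ' = κω' or τ + τ' = (κ + 1)ω'; in both cases τ' ≤ τ. -/
/-- If `w ∣ x`, `x` is even, `w` is odd positive, and `2kw < x < (2k+4)w`,
then `x = (2k+2)w`. -/
private lemma keyMult (k w x : ℤ) (hw : 0 < w) (hwo : w % 2 = 1) (hx : x % 2 = 0)
    (hd : w ∣ x) (h1 : 2 * k * w < x) (h2 : x < (2 * k + 4) * w) : x = (2 * k + 2) * w := by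
  obtain ⟨m, rfl⟩ := hd
  have hm1 : 2 * k < m := by
    by_contra hcon
    push_neg at hcon
    have := mul_le_mul_of_nonneg_left hcon hw.le
    nlinarith
  have hm2 : m < 2 * k + 4 := by
    by_contra hcon
    push_neg at hcon
    have := mul_le_mul_of_nonneg_left hcon hw.le
    nlinarith
  have hmod := Int.mul_emod w m 2
  rw [hwo] at hmod
  have hm0 : m % 2 = 0 := by omega
  have : m = 2 * k + 2 := by omega
  subst this
  ring

/-- either τ - τ' = κω' or τ + τ' = (κ+1)ω'; in both cases τ' ≤ τ. -/
theorem tune_relation (p q τ κ p' q' τ' : ℕ) (h : EvenParam p q) (hp2 : 2 ≤ p)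
    (hτ : IsTune p q τ) (hκ : IsKappa p q τ κ)
    (hpred : IsEvenPred p q p' q') (hτ' : IsTune p' q' τ') :
    ((τ : ℤ) - τ' = κ * ((p' : ℤ) + q') ∨
      (τ : ℤ) + τ' = (κ + 1) * ((p' : ℤ) + q')) ∧ τ' ≤ τ := by
  obtain ⟨hcop, hp0, hpq, heven⟩ := h
  obtain ⟨hτ0, hτω, hdvd⟩ := hτ
  obtain ⟨hκ1, hκ2⟩ := hκ
  obtain ⟨hcop', hpq', heven', habs, hωlt⟩ := hpred
  obtain ⟨hτ'0, hτ'ω', hdvd'⟩ := hτ'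
  -- ω = p + q is odd
  have hWone : (p + q) % 2 = 1 := by
    have h1 : p % 2 = 0 ∨ q % 2 = 0 := by
      rcases Nat.even_mul.mp heven with h | h
      · exact Or.inl (Nat.even_iff.mp h)
      · exact Or.inr (Nat.even_iff.mp h)
    have hg : Nat.gcd p q = 1 := hcop
    have h2 : ¬(p % 2 = 0 ∧ q % 2 = 0) := by
      rintro ⟨ha, hb⟩
      have : 2 ∣ Nat.gcd p q :=
        Nat.dvd_gcd (Nat.dvd_of_mod_eq_zero ha) (Nat.dvd_of_mod_eq_zero hb)
      omega
    omega
  -- p' ≥ 1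
  have hp' : 1 ≤ p' := by
    rcases Nat.eq_zero_or_pos p' with h0 | h1
    · subst h0
      have hq'1 : q' = 1 := by simpa [Nat.coprime_zero_left] using hcop'
      subst hq'1
      simp at habs
      omega
    · exact h1
  -- ω' = p' + q' is odd
  have hW'one : (p' + q') % 2 = 1 := by
    have h1 : p' % 2 = 0 ∨ q' % 2 = 0 := by
      rcases Nat.even_mul.mp heven' with h | h
      · exact Or.inl (Nat.even_iff.mp h)
      · exact Or.inr (Nat.even_iff.mp h)
    have hg : Nat.gcd p' q' = 1 := hcop'
    have h2 : ¬(p' % 2 = 0 ∧ q' % 2 = 0) := by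
      rintro ⟨ha, hb⟩
      have : 2 ∣ Nat.gcd p' q' :=
        Nat.dvd_gcd (Nat.dvd_of_mod_eq_zero ha) (Nat.dvd_of_mod_eq_zero hb)
      omega
    omega
  -- the sign e = p q' - q p' = ±1
  obtain ⟨e, he, hedef⟩ : ∃ e : ℤ, (e = 1 ∨ e = -1) ∧ (p : ℤ) * q' - q * p' = e := by
    rcases Int.natAbs_eq_iff.mp habs with h | h
    · exact ⟨1, Or.inl rfl, by exact_mod_cast h⟩
    · exact ⟨-1, Or.inr rfl, by exact_mod_cast h⟩
  have he2 : e * e = 1 := by rcases he with rfl | rfl <;> norm_num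
  -- the fundamental identity p ω' = p' ω + e
  have hid : (p : ℤ) * ((p' : ℤ) + q') = (p' : ℤ) * ((p : ℤ) + q) + e := by
    linear_combination hedef
  -- tune signs
  obtain ⟨d, hd, hddvd⟩ : ∃ d : ℤ, (d = 1 ∨ d = -1) ∧ ((p : ℤ) + q) ∣ 2 * p * τ - d := by
    rcases hdvd with h | h
    · exact ⟨1, Or.inl rfl, h⟩
    · exact ⟨-1, Or.inr rfl, by simpa [sub_neg_eq_add] using h⟩
  obtain ⟨d', hd', hd'dvd⟩ : ∃ d' : ℤ, (d' = 1 ∨ d' = -1) ∧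
      ((p' : ℤ) + q') ∣ 2 * p' * τ' - d' := by
    rcases hdvd' with h | h
    · exact ⟨1, Or.inl rfl, h⟩
    · exact ⟨-1, Or.inr rfl, by simpa [sub_neg_eq_add] using h⟩
  -- transfer the tune congruence of τ to modulus ω
  have hdvd1 : ((p : ℤ) + q) ∣ 2 * (τ : ℤ) * e - d * ((p' : ℤ) + q') := by
    obtain ⟨c, hc⟩ := hddvd
    exact ⟨((p' : ℤ) + q') * c - 2 * τ * p',
      by linear_combination (-(2 * (τ : ℤ))) * hid + ((p' : ℤ) + q') * hc⟩
  have hdvd1' : ((p : ℤ) + q) ∣ 2 * (τ : ℤ) - (e * d) * ((p' : ℤ) + q') := by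
    have h1 := hdvd1.mul_left e
    have h2 : e * (2 * (τ : ℤ) * e - d * ((p' : ℤ) + q')) =
        2 * (τ : ℤ) - (e * d) * ((p' : ℤ) + q') := by
      linear_combination (2 * (τ : ℤ)) * he2
    rwa [h2] at h1
  have hs : e * d = 1 ∨ e * d = -1 := by
    rcases he with rfl | rfl <;> rcases hd with rfl | rfl <;> norm_num
  -- Key equality: 2τ + ω' = ω
  have hE1 : 2 * (τ : ℤ) + ((p' : ℤ) + q') = (p : ℤ) + q := by
    rcases hs with hs1 | hs1
    · exfalso
      rw [hs1, one_mul] at hdvd1'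
      have h0 : 2 * (τ : ℤ) - ((p' : ℤ) + q') = 0 := by
        refine Int.eq_zero_of_abs_lt_dvd hdvd1' ?_
        rw [abs_lt]
        constructor <;> omega
      omega
    · rw [hs1] at hdvd1'
      have h3 : 2 * (τ : ℤ) - (-1) * ((p' : ℤ) + q') = 2 * (τ : ℤ) + ((p' : ℤ) + q') := by
        ring
      rw [h3] at hdvd1'
      have hd2 : ((p : ℤ) + q) ∣ 2 * (τ : ℤ) + ((p' : ℤ) + q') - ((p : ℤ) + q) :=
        dvd_sub hdvd1' dvd_rfl
      have h0 : 2 * (τ : ℤ) + ((p' : ℤ) + q') - ((p : ℤ) + q) = 0 := by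
        refine Int.eq_zero_of_abs_lt_dvd hd2 ?_
        rw [abs_lt]
        constructor <;> omega
      omega
  -- κ bounds in ℤ
  have hκZ1 : (κ : ℤ) * ((p : ℤ) + q) ≤ (2 * κ + 1) * (τ : ℤ) := by
    have := hκ1; zify at this; linarith
  have hκZ2 : (2 * (κ : ℤ) + 3) * (τ : ℤ) < ((κ : ℤ) + 1) * ((p : ℤ) + q) := by
    have := hκ2; zify at this; linarith
  have hEk : 2 * (κ : ℤ) * (τ : ℤ) + (κ : ℤ) * ((p' : ℤ) + q') = (κ : ℤ) * ((p : ℤ) + q) := by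
    linear_combination (κ : ℤ) * hE1
  have hτ'Z : 0 < (τ' : ℤ) := by omega
  have hτ'Z2 : 2 * (τ' : ℤ) < (p' : ℤ) + q' := by omega
  have hB1 : (2 * (κ : ℤ) + 1) * ((p' : ℤ) + q') ≤ (p : ℤ) + q := by
    linarith [hκZ1, hEk, hE1]
  have hB2 : (p : ℤ) + q < (2 * (κ : ℤ) + 3) * ((p' : ℤ) + q') := by
    linarith [hκZ2, hEk, hE1]
  -- transfer the tune congruence of τ' to modulus ω'
  have hdvd2 : ((p' : ℤ) + q') ∣ 2 * (τ' : ℤ) * e + d' * ((p : ℤ) + q) := by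
    obtain ⟨c, hc⟩ := hd'dvd
    exact ⟨2 * τ' * p - ((p : ℤ) + q) * c,
      by linear_combination (-(2 * (τ' : ℤ))) * hid - ((p : ℤ) + q) * hc⟩
  have hdvd2' : ((p' : ℤ) + q') ∣ 2 * (τ' : ℤ) + (e * d') * ((p : ℤ) + q) := by
    have h1 := hdvd2.mul_left e
    have h2 : e * (2 * (τ' : ℤ) * e + d' * ((p : ℤ) + q)) =
        2 * (τ' : ℤ) + (e * d') * ((p : ℤ) + q) := by
      linear_combination (2 * (τ' : ℤ)) * he2
    rwa [h2] at h1
  have hs' : e * d' = 1 ∨ e * d' = -1 := by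
    rcases he with rfl | rfl <;> rcases hd' with rfl | rfl <;> norm_num
  have hW'pos : (0 : ℤ) < (p' : ℤ) + q' := by omega
  have hW'odd : ((p' : ℤ) + q') % 2 = 1 := by omega
  have hk0 : (0 : ℤ) ≤ (κ : ℤ) * ((p' : ℤ) + q') := by positivity
  rcases hs' with hs1 | hs1
  · -- case e d' = 1 : ω' ∣ ω - ω' + 2τ', giving τ + τ' = (κ+1) ω'
    rw [hs1, one_mul] at hdvd2'
    have hX : ((p' : ℤ) + q') ∣ ((p : ℤ) + q) - ((p' : ℤ) + q') + 2 * (τ' : ℤ) := by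
      have h3 : ((p : ℤ) + q) - ((p' : ℤ) + q') + 2 * (τ' : ℤ) =
          (2 * (τ' : ℤ) + ((p : ℤ) + q)) - ((p' : ℤ) + q') := by ring
      rw [h3]
      exact dvd_sub hdvd2' dvd_rfl
    have hE3 : ((p : ℤ) + q) - ((p' : ℤ) + q') + 2 * (τ' : ℤ) =
        (2 * (κ : ℤ) + 2) * ((p' : ℤ) + q') := by
      refine keyMult (κ : ℤ) _ _ hW'pos hW'odd (by omega) hX ?_ ?_
      · linarith [hB1, hτ'Z]
      · linarith [hB2, hτ'Z2, hW'pos]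
    constructor
    · right
      have h2 : (2 : ℤ) * ((τ : ℤ) + (τ' : ℤ)) =
          2 * (((κ : ℤ) + 1) * ((p' : ℤ) + q')) := by
        linear_combination hE3 + hE1
      exact mul_left_cancel₀ (by norm_num : (2 : ℤ) ≠ 0) h2
    · have hle : (τ' : ℤ) ≤ (τ : ℤ) := by linarith [hE3, hE1, hk0, hτ'Z2]
      exact_mod_cast hle
  · -- case e d' = -1 : ω' ∣ ω + ω' - 2τ', giving τ - τ' = κ ω'
    rw [hs1] at hdvd2'
    have hX : ((p' : ℤ) + q') ∣ ((p : ℤ) + q) + ((p' : ℤ) + q') - 2 * (τ' : ℤ) := by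
      have h3 : ((p : ℤ) + q) + ((p' : ℤ) + q') - 2 * (τ' : ℤ) =
          ((p' : ℤ) + q') - (2 * (τ' : ℤ) + (-1) * ((p : ℤ) + q)) := by ring
      rw [h3]
      exact dvd_sub dvd_rfl hdvd2'
    have hE3 : ((p : ℤ) + q) + ((p' : ℤ) + q') - 2 * (τ' : ℤ) =
        (2 * (κ : ℤ) + 2) * ((p' : ℤ) + q') := by
      refine keyMult (κ : ℤ) _ _ hW'pos hW'odd (by omega) hX ?_ ?_
      · linarith [hB1, hτ'Z2, hW'pos]
      · linarith [hB2, hτ'Z]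
    constructor
    · left
      have h2 : (2 : ℤ) * ((τ : ℤ) - (τ' : ℤ)) =
          2 * ((κ : ℤ) * ((p' : ℤ) + q')) := by
        linear_combination hE1 + hE3
      exact mul_left_cancel₀ (by norm_num : (2 : ℤ) ≠ 0) h2
    · have hle : (τ' : ℤ) ≤ (τ : ℤ) := by linarith [hE3, hE1, hk0, hτ'Z2]
      exact_mod_cast hle
end

section
/- Let p/q be an even rational parameter with p ≥ 2, tune τ, and core predecessor p̂/q̂ with ω̂ = p̂ + q̂ and tune τ̂. Then ω − 2τ = ω̂ − 2τ̂, where ω = p + q. -/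
/-- Key lemma: if `t` is the tune of `a/b` and `p'/q'` satisfies the determinant
condition with `p'+q'` odd and `p'+q' ≤ a+b`, then `2t + (p'+q') = a+b`. -/
lemma tune_aux (a b p' q' t : ℕ) (hodd : ¬ Even (p' + q'))
    (hle : p' + q' ≤ a + b) (ht : IsTune a b t)
    (hdet : ((a : ℤ) * q' - (b : ℤ) * p').natAbs = 1) :
    2 * t + (p' + q') = a + b := by
  obtain ⟨hpos, hlt, hdvd⟩ := ht
  have hw0 : 0 < p' + q' := by
    rcases Nat.eq_zero_or_pos (p' + q') with h | h
    · exact absurd (h ▸ Even.zero) hodd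
    · exact h
  have hd := Int.natAbs_eq_iff.mp hdet
  norm_num at hd
  have hmpos : (0 : ℤ) < (a : ℤ) + b := by
    have : 0 < a + b := lt_of_le_of_lt (Nat.zero_le _) hlt
    exact_mod_cast this
  have ht1 : (0 : ℤ) < 2 * t := by exact_mod_cast hpos
  have ht2 : (2 * t : ℤ) < (a : ℤ) + b := by exact_mod_cast hlt
  have hw1 : (0 : ℤ) < (p' : ℤ) + q' := by exact_mod_cast hw0
  have hw2 : ((p' : ℤ) + q') ≤ (a : ℤ) + b := by exact_mod_cast hle
  -- a * (p'+q') ≡ a*q' - b*p'  (mod a+b)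
  have hkey : ((a : ℤ) + b) ∣ (a : ℤ) * ((p' : ℤ) + q') - ((a : ℤ) * q' - (b : ℤ) * p') :=
    ⟨(p' : ℤ), by ring⟩
  -- derive: (a+b) ∣ 2t - (p'+q')  or  (a+b) ∣ 2t + (p'+q')
  have main : ((a : ℤ) + b) ∣ 2 * t - ((p' : ℤ) + q') ∨
      ((a : ℤ) + b) ∣ 2 * t + ((p' : ℤ) + q') := by
    rcases hdvd with h1 | h1 <;> rcases hd with h2 | h2
    · left
      rw [h2] at hkey
      have c := dvd_sub (Dvd.dvd.mul_left h1 ((p' : ℤ) + q'))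
        (Dvd.dvd.mul_left hkey (2 * t))
      have : ((p' : ℤ) + q') * (2 * a * t - 1) -
          2 * t * ((a : ℤ) * ((p' : ℤ) + q') - 1) = 2 * t - ((p' : ℤ) + q') := by ring
      rw [this] at c
      exact c
    · right
      rw [h2] at hkey
      have c := dvd_sub (Dvd.dvd.mul_left h1 ((p' : ℤ) + q'))
        (Dvd.dvd.mul_left hkey (2 * t))
      have : ((p' : ℤ) + q') * (2 * a * t - 1) -
          2 * t * ((a : ℤ) * ((p' : ℤ) + q') - (-1)) = -(2 * t + ((p' : ℤ) + q')) := by ring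
      rw [this] at c
      exact (dvd_neg).mp c
    · right
      rw [h2] at hkey
      have c := dvd_sub (Dvd.dvd.mul_left h1 ((p' : ℤ) + q'))
        (Dvd.dvd.mul_left hkey (2 * t))
      have : ((p' : ℤ) + q') * (2 * a * t + 1) -
          2 * t * ((a : ℤ) * ((p' : ℤ) + q') - 1) = 2 * t + ((p' : ℤ) + q') := by ring
      rw [this] at c
      exact c
    · left
      rw [h2] at hkey
      have c := dvd_sub (Dvd.dvd.mul_left h1 ((p' : ℤ) + q'))
        (Dvd.dvd.mul_left hkey (2 * t))
      have : ((p' : ℤ) + q') * (2 * a * t + 1) -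
          2 * t * ((a : ℤ) * ((p' : ℤ) + q') - (-1)) = -(2 * t - ((p' : ℤ) + q')) := by ring
      rw [this] at c
      exact (dvd_neg).mp c
  rcases main with hm | hm
  · -- forces 2t = p'+q', contradicting parity
    have hz : 2 * (t : ℤ) - ((p' : ℤ) + q') = 0 := by
      apply Int.eq_zero_of_abs_lt_dvd hm
      rw [abs_lt]
      constructor <;> linarith
    exfalso
    apply hodd
    have h2t : (2 * (t : ℤ)) = (p' : ℤ) + q' := sub_eq_zero.mp hz
    have : 2 * t = p' + q' := by exact_mod_cast h2t
    exact ⟨t, by omega⟩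
  · -- forces 2t + (p'+q') = a+b
    have hz : 2 * (t : ℤ) + ((p' : ℤ) + q') - ((a : ℤ) + b) = 0 := by
      apply Int.eq_zero_of_abs_lt_dvd (dvd_sub hm dvd_rfl)
      rw [abs_lt]
      constructor <;> linarith
    exact_mod_cast (by linarith : (2 * (t : ℤ) + ((p' : ℤ) + q')) = (a : ℤ) + b)

/-- ω - 2τ = ω̂ - 2τ̂. -/
theorem corePred_height (p q τ κ p' q' phat qhat tauhat : ℕ)
    (h : EvenParam p q) (hp2 : 2 ≤ p)
    (hτ : IsTune p q τ) (hκ : IsKappa p q τ κ)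
    (hpred : IsEvenPred p q p' q')
    (hphat : phat + 2 * κ * p' = p) (hqhat : qhat + 2 * κ * q' = q)
    (htauhat : IsTune phat qhat tauhat) :
    ((p : ℤ) + q) - 2 * τ = ((phat : ℤ) + qhat) - 2 * tauhat := by
  obtain ⟨hcop, hltpq, heven, hdet, hsum⟩ := hpred
  -- p' + q' is odd
  have hodd : ¬ Even (p' + q') := by
    intro hev
    rcases Nat.even_mul.mp heven with he | he
    · have hq : Even q' := (Nat.even_add.mp hev).mp he
      have : (2 : ℕ) ∣ 1 := hcop ▸ Nat.dvd_gcd he.two_dvd hq.two_dvd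
      omega
    · have hp : Even p' := (Nat.even_add.mp hev).mpr he
      have : (2 : ℕ) ∣ 1 := hcop ▸ Nat.dvd_gcd hp.two_dvd he.two_dvd
      omega
  have e1 : 2 * τ + (p' + q') = p + q :=
    tune_aux p q p' q' τ hodd (le_of_lt hsum) hτ hdet
  -- determinant condition for the core predecessor
  have hdet2 : ((phat : ℤ) * q' - (qhat : ℤ) * p').natAbs = 1 := by
    have h1 : (phat : ℤ) + 2 * κ * p' = p := by exact_mod_cast hphat
    have h2 : (qhat : ℤ) + 2 * κ * q' = q := by exact_mod_cast hqhat
    have : (phat : ℤ) * q' - (qhat : ℤ) * p' = (p : ℤ) * q' - (q : ℤ) * p' := by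
      linear_combination (q' : ℤ) * h1 - (p' : ℤ) * h2
    rw [this]
    exact hdet
  -- p' + q' ≤ phat + qhat, from the kappa inequality
  have hω : p + q = (phat + qhat) + 2 * κ * (p' + q') := by
    have := Nat.mul_add (2 * κ) p' q'
    omega
  have hle2 : p' + q' ≤ phat + qhat := by
    nlinarith [hκ.1, e1, hω]
  have e2 : 2 * tauhat + (p' + q') = phat + qhat :=
    tune_aux phat qhat p' q' tauhat hodd hle2 htauhat hdet2
  push_cast
  omega
end

section
/- Let p/q be an even rational parameter with p ≥ 2, tune τ, even predecessor p'/q' (with ω' = p' + q' and tune τ'), and suppose κ(p/q) = 0. Then: if 4τ < ω then τ' = τ, and if 4τ > ω then τ' = ω' − τ (the case 4τ = ω is impossible since ω is odd). -/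
lemma odd_sum_of_coprime {p q : ℕ} (hcop : Nat.Coprime p q) (hev : Even (p * q)) :
    Odd (p + q) := by
  have h2 : p % 2 = 0 ∨ q % 2 = 0 := by
    rcases Nat.even_mul.mp hev with h | h
    · exact Or.inl (Nat.even_iff.mp h)
    · exact Or.inr (Nat.even_iff.mp h)
  have hnb : ¬(p % 2 = 0 ∧ q % 2 = 0) := by
    rintro ⟨hp, hq⟩
    have : (2:ℕ) ∣ Nat.gcd p q :=
      Nat.dvd_gcd (Nat.dvd_of_mod_eq_zero hp) (Nat.dvd_of_mod_eq_zero hq)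
    rw [hcop] at this
    omega
  rw [Nat.odd_iff]
  omega

lemma tune_unique {p q a b : ℕ} (hcop : Nat.Coprime p q) (hodd : Odd (p + q))
    (ha : IsTune p q a) (hb : IsTune p q b) : a = b := by
  obtain ⟨ha1, ha2, ha3⟩ := ha
  obtain ⟨hb1, hb2, hb3⟩ := hb
  have hcop2 : Nat.Coprime (p + q) (2 * p) := by
    refine Nat.Coprime.mul_right (Nat.coprime_two_right.mpr hodd) ?_
    have := (Nat.coprime_add_self_left (m := q) (n := p)).mpr (Nat.coprime_comm.mp hcop)
    simpa [Nat.add_comm] using this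
  have hcoZ : IsCoprime ((p : ℤ) + q) (2 * p) := by
    have := Nat.isCoprime_iff_coprime.mpr hcop2
    push_cast at this
    convert this using 2
  have key : ∀ c x y : ℤ, ((p:ℤ) + q) ∣ 2 * p * x - c → ((p:ℤ) + q) ∣ 2 * p * y - c →
      ((p:ℤ) + q) ∣ x - y := by
    intro c x y hx hy
    have h1 : ((p:ℤ) + q) ∣ 2 * p * (x - y) := by
      have h2 : 2 * (p:ℤ) * (x - y) = (2 * p * x - c) - (2 * p * y - c) := by ring
      rw [h2]; exact dvd_sub hx hy
    exact hcoZ.dvd_of_dvd_mul_left h1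
  have key2 : ∀ x y : ℤ, ((p:ℤ) + q) ∣ 2 * p * x - 1 → ((p:ℤ) + q) ∣ 2 * p * y + 1 →
      ((p:ℤ) + q) ∣ x + y := by
    intro x y hx hy
    have h1 : ((p:ℤ) + q) ∣ 2 * p * (x + y) := by
      have h2 : 2 * (p:ℤ) * (x + y) = (2 * p * x - 1) + (2 * p * y + 1) := by ring
      rw [h2]; exact dvd_add hx hy
    exact hcoZ.dvd_of_dvd_mul_left h1
  -- helper to kill the mixed case
  have mixed : ∀ x y : ℕ, 0 < 2 * x → 2 * x < p + q → 2 * y < p + q →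
      ¬ ((p:ℤ) + q) ∣ (x:ℤ) + y := by
    intro x y hx1 hx2 hy2 hd
    have h0 : ((x:ℤ) + y) = 0 := by
      apply Int.eq_zero_of_abs_lt_dvd hd
      rw [abs_of_nonneg (by positivity)]
      omega
    omega
  rcases ha3 with ha3 | ha3 <;> rcases hb3 with hb3 | hb3
  · have := key 1 _ _ ha3 hb3
    have h0 : ((a:ℤ) - b) = 0 := by
      apply Int.eq_zero_of_abs_lt_dvd this
      rw [abs_sub_lt_iff]
      constructor <;> omega
    omega
  · exact absurd (key2 _ _ ha3 hb3) (mixed _ _ ha1 ha2 hb2)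
  · exact absurd (key2 _ _ hb3 ha3) (by simpa [add_comm] using mixed _ _ hb1 hb2 ha2)
  · have := key (-1) (a:ℤ) (b:ℤ) (by simpa [sub_neg_eq_add] using ha3) (by simpa [sub_neg_eq_add] using hb3)
    have h0 : ((a:ℤ) - b) = 0 := by
      apply Int.eq_zero_of_abs_lt_dvd this
      rw [abs_sub_lt_iff]
      constructor <;> omega
    omega

/-- when κ = 0, τ' = τ if 4τ < ω, and τ' = ω' - τ if 4τ > ω. -/
theorem tune_of_evenPred_kappa_zero (p q τ p' q' τ' : ℕ)
    (h : EvenParam p q) (hp2 : 2 ≤ p)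
    (hτ : IsTune p q τ) (hκ : IsKappa p q τ 0)
    (hpred : IsEvenPred p q p' q') (hτ' : IsTune p' q' τ') :
    (4 * τ < p + q → τ' = τ) ∧
      (p + q < 4 * τ → (τ' : ℤ) = ((p' : ℤ) + q') - τ) := by
  obtain ⟨hcop, hp0, hpq, hev⟩ := h
  obtain ⟨hτ1, hτ2, hτ3⟩ := hτ
  obtain ⟨hκ1, hκ2⟩ := hκ
  obtain ⟨hcop', hpq', hev', habs, hlt⟩ := hpred
  have hκ3 : 3 * τ < p + q := by omega
  -- p' ≥ 1
  have hp'pos : 0 < p' := by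
    rcases Nat.eq_zero_or_pos p' with h0 | h0
    · exfalso
      subst h0
      simp [Int.natAbs_mul] at habs
      omega
    · exact h0
  have hodd : Odd (p + q) := odd_sum_of_coprime hcop hev
  have hodd' : Odd (p' + q') := odd_sum_of_coprime hcop' hev'
  -- ε and k
  obtain ⟨ε, hε1, k, hk⟩ : ∃ ε : ℤ, (ε = 1 ∨ ε = -1) ∧
      ∃ k : ℤ, 2 * (p:ℤ) * τ - ε = ((p:ℤ) + q) * k := by
    rcases hτ3 with hd | hd
    · obtain ⟨k, hk⟩ := hd; exact ⟨1, Or.inl rfl, k, hk⟩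
    · obtain ⟨k, hk⟩ := hd
      exact ⟨-1, Or.inr rfl, k, by rw [sub_neg_eq_add]; exact hk⟩
  -- δ
  obtain ⟨δ, hδ1, hδ⟩ : ∃ δ : ℤ, (δ = 1 ∨ δ = -1) ∧ (p:ℤ) * q' - (q:ℤ) * p' = δ := by
    rcases Int.natAbs_eq_iff.mp habs with hh | hh
    · exact ⟨1, Or.inl rfl, by exact_mod_cast hh⟩
    · exact ⟨-1, Or.inr rfl, by exact_mod_cast hh⟩
  set W : ℤ := 2 * (p':ℤ) * τ - ((p':ℤ) + q') * k with hWdef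
  have key : ((p:ℤ) + q) * W = ε * ((p':ℤ) + q') - 2 * δ * τ := by
    rw [hWdef]
    linear_combination ((p':ℤ) + q') * hk - 2 * (τ:ℤ) * hδ
  have hωpos : (0:ℤ) < (p:ℤ) + q := by
    have : 0 < p + q := by omega
    exact_mod_cast this
  have hodd'2 : (p' + q') % 2 = 1 := Nat.odd_iff.mp hodd'
  have hbound1 : ((p:ℤ) + q) * W < 2 * ((p:ℤ) + q) := by
    rw [key]; rcases hε1 with rfl | rfl <;> rcases hδ1 with rfl | rfl <;> push_cast <;> omega
  have hbound2 : -(2 * ((p:ℤ) + q)) < ((p:ℤ) + q) * W := by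
    rw [key]; rcases hε1 with rfl | rfl <;> rcases hδ1 with rfl | rfl <;> push_cast <;> omega
  have hWne : W ≠ 0 := by
    intro hW0
    rw [hW0, mul_zero] at key
    rcases hε1 with rfl | rfl <;> rcases hδ1 with rfl | rfl <;> omega
  have hWlt : W < 2 := by
    by_contra hc; push_neg at hc
    nlinarith
  have hWgt : -2 < W := by
    by_contra hc; push_neg at hc
    nlinarith
  have hW : W = 1 ∨ W = -1 := by omega
  have hωeq : ((p':ℤ) + q') = ((p:ℤ) + q) - 2 * τ := by
    rcases hW with hw | hw <;> rw [hw] at key <;>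
      rcases hε1 with rfl | rfl <;> rcases hδ1 with rfl | rfl <;> omega
  have hdvd : ((p':ℤ) + q') ∣ 2 * (p':ℤ) * τ - W := ⟨k, by rw [hWdef]; ring⟩
  obtain ⟨c, hc⟩ := hdvd
  constructor
  · intro h4
    have htune : IsTune p' q' τ := by
      refine ⟨hτ1, by omega, ?_⟩
      rcases hW with hw | hw <;> rw [hw] at hc
      · exact Or.inl ⟨c, hc⟩
      · exact Or.inr ⟨c, by rw [← hc]; ring⟩
    exact tune_unique hcop' hodd' hτ' htune
  · intro h4
    have hτlt : τ < p' + q' := by omega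
    have hcast : ((p' + q' - τ : ℕ) : ℤ) = (p':ℤ) + q' - τ := by omega
    have htune : IsTune p' q' (p' + q' - τ) := by
      refine ⟨by omega, by omega, ?_⟩
      rcases hW with hw | hw <;> rw [hw] at hc
      · refine Or.inr ⟨2 * p' - c, ?_⟩
        rw [hcast]
        linear_combination -hc
      · refine Or.inl ⟨2 * p' - c, ?_⟩
        rw [hcast]
        linear_combination -hc
    have heq := tune_unique hcop' hodd' hτ' htune
    rw [heq]
    omega
end

section
/- Let p/q be an even rational parameter with p ≥ 2, κ = κ(p/q) ≥ 1, and core predecessor p̂/q̂ with ω̂ = p̂ + q̂. Then 2κω̂ < 3ω, where ω = p + q. -/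
/-- Auxiliary: the even predecessor's total `p'+q'` is `2τ` or `(p+q)-2τ`. -/
theorem corePred_key (p q τ p' q' : ℕ)
    (hcop : Nat.Coprime p q) (hτlt : 2 * τ < p + q) (hτpos : 0 < 2 * τ)
    (hdvd : ((p : ℤ) + q) ∣ 2 * p * τ - 1 ∨ ((p : ℤ) + q) ∣ 2 * p * τ + 1)
    (habs : ((p : ℤ) * q' - (q : ℤ) * p').natAbs = 1)
    (hlt : p' + q' < p + q) (hp'q' : p' < q') (hp : 0 < p) :
    p' + q' = 2 * τ ∨ p' + q' + 2 * τ = p + q := by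
  have hc : IsCoprime ((p : ℤ) + q) (p : ℤ) := by
    have h1 : Nat.Coprime (p + q) p := by rw [Nat.add_comm]; exact Nat.coprime_add_self_left.mpr hcop.symm
    have := Nat.isCoprime_iff_coprime.mpr h1
    simpa using this
  have hδ : ((p : ℤ) * q' - (q : ℤ) * p') = 1 ∨ ((p : ℤ) * q' - (q : ℤ) * p') = -1 := by
    rcases Int.natAbs_eq ((p : ℤ) * q' - (q : ℤ) * p') with h1 | h1 <;> rw [habs] at h1 <;> omega
  have hd1 : ((p : ℤ) + q) ∣ (p : ℤ) * (p' + q') - ((p : ℤ) * q' - (q : ℤ) * p') :=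
    ⟨p', by ring⟩
  have hωpos : (0 : ℤ) < (p : ℤ) + q := by push_cast; omega
  -- unified: ω ∣ p * (ω' - 2τ) or ω ∣ p * (ω' + 2τ)
  have key : ((p : ℤ) + q) ∣ (p : ℤ) * ((p' + q') - 2 * τ) ∨
      ((p : ℤ) + q) ∣ (p : ℤ) * ((p' + q') + 2 * τ) := by
    rcases hdvd with he | he <;> rcases hδ with hd | hd
    · left
      have h3 := dvd_sub hd1 he
      rw [hd] at h3
      have : (p : ℤ) * (p' + q') - 1 - (2 * p * τ - 1) = (p : ℤ) * ((p' + q') - 2 * τ) := by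
        ring
      rwa [this] at h3
    · right
      have h3 := dvd_add hd1 he
      rw [hd] at h3
      have : (p : ℤ) * (p' + q') - (-1) + (2 * p * τ - 1) = (p : ℤ) * ((p' + q') + 2 * τ) := by
        ring
      rwa [this] at h3
    · right
      have h3 := dvd_add hd1 he
      rw [hd] at h3
      have : (p : ℤ) * (p' + q') - 1 + (2 * p * τ + 1) = (p : ℤ) * ((p' + q') + 2 * τ) := by
        ring
      rwa [this] at h3
    · left
      have h3 := dvd_sub hd1 he
      rw [hd] at h3
      have : (p : ℤ) * (p' + q') - (-1) - (2 * p * τ + 1) = (p : ℤ) * ((p' + q') - 2 * τ) := by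
        ring
      rwa [this] at h3
  rcases key with hkd | hkd
  · left
    have hdd : ((p : ℤ) + q) ∣ ((p' : ℤ) + q') - 2 * τ :=
      hc.dvd_of_dvd_mul_right (by rwa [mul_comm] at hkd)
    have h0 : ((p' : ℤ) + q') - 2 * τ = 0 := by
      apply Int.eq_zero_of_abs_lt_dvd hdd
      rw [abs_lt]
      constructor <;> push_cast <;> omega
    have : (p' : ℤ) + q' = 2 * τ := by omega
    exact_mod_cast this
  · right
    have hdd : ((p : ℤ) + q) ∣ ((p' : ℤ) + q') + 2 * τ :=
      hc.dvd_of_dvd_mul_right (by rwa [mul_comm] at hkd)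
    have hdd2 : ((p : ℤ) + q) ∣ ((p' : ℤ) + q') + 2 * τ - ((p : ℤ) + q) :=
      (dvd_sub_right hdd).mpr dvd_rfl
    have h0 : ((p' : ℤ) + q') + 2 * τ - ((p : ℤ) + q) = 0 := by
      apply Int.eq_zero_of_abs_lt_dvd hdd2
      rw [abs_lt]
      constructor <;> push_cast <;> omega
    have : ((p' : ℤ) + q') + 2 * τ = (p : ℤ) + q := by omega
    exact_mod_cast this

/-- if κ ≥ 1 then 2κω̂ < 3ω. -/
theorem corePred_omega_bound (p q τ κ p' q' phat qhat : ℕ)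
    (h : EvenParam p q) (hp2 : 2 ≤ p)
    (hτ : IsTune p q τ) (hκ : IsKappa p q τ κ) (hκ1 : 1 ≤ κ)
    (hpred : IsEvenPred p q p' q')
    (hphat : phat + 2 * κ * p' = p) (hqhat : qhat + 2 * κ * q' = q) :
    2 * κ * (phat + qhat) < 3 * (p + q) := by
  obtain ⟨hcop, hp, hpq, _⟩ := h
  obtain ⟨hτpos, hτlt, hdvd⟩ := hτ
  obtain ⟨hκa, hκb⟩ := hκ
  obtain ⟨_, hp'q', _, habs, hlt⟩ := hpred
  have hkey := corePred_key p q τ p' q' hcop hτlt hτpos hdvd habs hlt hp'q' hp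
  have hmain : p + q < (2 * κ + 3) * (p' + q') := by
    rcases hkey with hk | hk
    · nlinarith [hκa, hκ1, hk, hτpos]
    · nlinarith [hκb, hk]
  nlinarith [hmain, hphat, hqhat, hκ1, Nat.zero_le (phat + qhat)]
end

section
/- Let p/q be an even rational parameter with p ≥ 2, tune τ, κ = κ(p/q) ≥ 1, and core predecessor p̂/q̂ with tune τ̂. Then (2κ + 1)(ω − 2τ) + 2τ̂ = ω, where ω = p + q. -/
theorem Nat.Coprime.odd_add_of_even_mul_s12 {a b : ℕ} (hab : a.Coprime b) (h : Even (a * b)) :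
    Odd (a + b) := by
  rw [← Nat.not_even_iff_odd]
  intro hsum
  have hboth : Even a ∧ Even b := by
    rcases Nat.even_mul.mp h with ha | hb
    · exact ⟨ha, (Nat.even_add.mp hsum).mp ha⟩
    · exact ⟨(Nat.even_add.mp hsum).mpr hb, hb⟩
  have h2 := Nat.Coprime.eq_one_of_dvd (Nat.Coprime.coprime_dvd_left hboth.1.two_dvd hab)
    hboth.2.two_dvd
  omega

/-- A residue class `±a⁻¹ (mod ω)` has at most one representative in `(0, ω/2)`. -/
theorem Int.eq_of_dvd_mul_sub_one_or_add_one_s12 {ω a s t : ℤ} (hco : IsCoprime ω a)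
    (hs : ω ∣ a * s - 1 ∨ ω ∣ a * s + 1) (ht : ω ∣ a * t - 1 ∨ ω ∣ a * t + 1)
    (hs0 : 0 < s) (ht0 : 0 ≤ t) (hsω : 2 * s < ω) (htω : 2 * t < ω) : s = t := by
  have cancel : ∀ x, ω ∣ a * x → |x| < ω → x = 0 := fun x hx hlt =>
    Int.eq_zero_of_abs_lt_dvd (hco.dvd_of_dvd_mul_left hx) hlt
  have hdiff : |s - t| < ω := abs_lt.mpr ⟨by linarith, by linarith⟩
  have hsum : |s + t| < ω := abs_lt.mpr ⟨by linarith, by linarith⟩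
  rcases hs with hs | hs <;> rcases ht with ht | ht
  · have h := dvd_sub hs ht
    rw [show a * s - 1 - (a * t - 1) = a * (s - t) by ring] at h
    exact sub_eq_zero.mp (cancel _ h hdiff)
  · have h := dvd_add hs ht
    rw [show a * s - 1 + (a * t + 1) = a * (s + t) by ring] at h
    linarith [cancel _ h hsum]
  · have h := dvd_add hs ht
    rw [show a * s + 1 + (a * t - 1) = a * (s + t) by ring] at h
    linarith [cancel _ h hsum]
  · have h := dvd_sub hs ht
    rw [show a * s + 1 - (a * t + 1) = a * (s - t) by ring] at h
    exact sub_eq_zero.mp (cancel _ h hdiff)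

section Determinant

variable {p q p' q' : ℤ} (hdet : (p * q' - q * p').natAbs = 1)
include hdet

theorem isCoprime_add_of_det : IsCoprime (p + q) p := by
  refine ⟨-p' * (p * q' - q * p'), (p' + q') * (p * q' - q * p'), ?_⟩
  rcases Int.natAbs_eq_iff.mp hdet with h | h <;> push_cast at h
  · linear_combination (p * q' - q * p' + 1) * h
  · linear_combination (p * q' - q * p' - 1) * h

theorem dvd_two_mul_sub_one_or_add_one_of_det {t : ℤ} (ht : 2 * t + (p' + q') = p + q) :
    (p + q) ∣ 2 * p * t - 1 ∨ (p + q) ∣ 2 * p * t + 1 := by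
  have h2pt : 2 * p * t + (p * q' - q * p') = (p + q) * (p - p') := by
    linear_combination p * ht
  rcases Int.natAbs_eq_iff.mp hdet with h | h
  · exact .inr ⟨p - p', by push_cast at h; linarith⟩
  · exact .inl ⟨p - p', by push_cast at h; linarith⟩

end Determinant

theorem IsTune.two_mul_add_eq_of_det {p q τ p' q' : ℕ} (hτ : IsTune p q τ) (hω : Odd (p + q))
    (hω' : Odd (p' + q')) (hdet : ((p : ℤ) * q' - q * p').natAbs = 1) (hle : p' + q' ≤ p + q) :
    2 * τ + (p' + q') = p + q := by
  obtain ⟨hτ0, hτω, hτd⟩ := hτ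
  obtain ⟨t, ht⟩ : ∃ t, p + q = 2 * t + (p' + q') := by
    obtain ⟨k, hk⟩ := hω
    obtain ⟨k', hk'⟩ := hω'
    exact ⟨k - k', by omega⟩
  have hω'0 : 0 < p' + q' := hω'.pos
  have hco : IsCoprime ((p : ℤ) + q) (2 * p) :=
    (Int.isCoprime_two_right.mpr (by exact_mod_cast hω)).mul_right (isCoprime_add_of_det hdet)
  have hτt : (τ : ℤ) = t :=
    Int.eq_of_dvd_mul_sub_one_or_add_one_s12 hco hτd
      (dvd_two_mul_sub_one_or_add_one_of_det hdet (by exact_mod_cast ht.symm))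
      (by omega) (by omega) (by omega) (by omega)
  omega

theorem corePred_main_identity_general (p q τ κ p' q' phat qhat tauhat : ℕ)
    (h : EvenParam p q)
    (hτ : IsTune p q τ) (hκ : IsKappa p q τ κ)
    (hpred : IsEvenPred p q p' q')
    (hphat : phat + 2 * κ * p' = p) (hqhat : qhat + 2 * κ * q' = q)
    (htauhat : IsTune phat qhat tauhat) :
    (2 * (κ : ℤ) + 1) * (((p : ℤ) + q) - 2 * τ) + 2 * tauhat = (p : ℤ) + q := by
  obtain ⟨hcop, -, -, hev⟩ := h
  obtain ⟨hcop', -, hev', hdet, hlt⟩ := hpred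
  have hω := hcop.odd_add_of_even_mul_s12 hev
  have hω' := hcop'.odd_add_of_even_mul_s12 hev'
  have hτ' := hτ.two_mul_add_eq_of_det hω hω' hdet hlt.le
  have hsum : phat + qhat + 2 * (κ * (p' + q')) = p + q := by rw [← hphat, ← hqhat]; ring
  have hωhat : Odd (phat + qhat) := by
    rw [← hsum] at hω
    exact (Nat.odd_add.mp hω).mpr (even_two_mul _)
  have hdethat : ((phat : ℤ) * q' - qhat * p').natAbs = 1 := by
    rw [← hdet]; congr 1
    rw [← hphat, ← hqhat]; push_cast; ring
  have hκω' : κ * (p' + q') ≤ τ := by nlinarith [hκ.1]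
  have hτhat := htauhat.two_mul_add_eq_of_det hωhat hω' hdethat (by omega)
  have hτhat' : 2 * tauhat + 2 * (κ * (p' + q')) = 2 * τ := by omega
  zify at hτ' hτhat'
  linear_combination hτhat' - 2 * (κ : ℤ) * hτ'

/-- (2κ+1)(ω - 2τ) + 2τ̂ = ω. -/
theorem corePred_main_identity (p q τ κ p' q' phat qhat tauhat : ℕ)
    (h : EvenParam p q) (hp2 : 2 ≤ p)
    (hτ : IsTune p q τ) (hκ : IsKappa p q τ κ) (hκ1 : 1 ≤ κ)
    (hpred : IsEvenPred p q p' q')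
    (hphat : phat + 2 * κ * p' = p) (hqhat : qhat + 2 * κ * q' = q)
    (htauhat : IsTune phat qhat tauhat) :
    (2 * (κ : ℤ) + 1) * (((p : ℤ) + q) - 2 * τ) + 2 * tauhat = (p : ℤ) + q :=
  corePred_main_identity_general p q τ κ p' q' phat qhat tauhat h hτ hκ hpred hphat hqhat htauhat
end

section
/- Let A ∈ (0,1) be irrational. Then there exists a sequence {p_n/q_n} of even rational parameters converging to A such that for every n, p_n/q_n is the even predecessor of p_{n+1}/q_{n+1}. -/
/-!
Keep an even fraction `x = p/q` (that is, `p + q` odd) and a fraction `y = r/s` with `r, s` odd,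
such that `|rq - sp| = 1` and `A` lies strictly between them. The Farey neighbours `y + k x`
(componentwise) of `x` alternate between odd/odd and even and tend to `x`, so the irrational `A`
is trapped between two consecutive ones; they form the next such pair, whose even member is a
Farey neighbour of `x` of larger height. As `A` lies in a Farey interval with endpoint `p/q`,
`|p/q - A| ≤ 1/q`, and `q` grows strictly along the way.
-/

lemma Irrational.natCast_sub_mul_ne_zero {A : ℝ} (hA : Irrational A) (r : ℕ) {s : ℕ}
    (hs : s ≠ 0) : (r : ℝ) - A * s ≠ 0 :=
  sub_ne_zero.2 ((hA.mul_natCast hs).ne_nat r).symm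

lemma exists_nat_sign_change {a b : ℝ} (hab : a * b < 0) (hne : ∀ k : ℕ, a + k * b ≠ 0) :
    ∃ k : ℕ, (a + k * b) * (a + (k + 1) * b) < 0 := by
  have hb : b ≠ 0 := by rintro rfl; simp at hab
  set t := -a / b
  have htb : t * b = -a := div_mul_cancel₀ _ hb
  have ht : 0 ≤ t := by
    have htbb : t * (b * b) = -(a * b) := by rw [← mul_assoc, htb]; ring
    nlinarith [mul_self_pos.2 hb]
  have hlin : ∀ x : ℝ, a + x * b = b * (x - t) := fun x => by linear_combination htb
  refine ⟨⌊t⌋₊, ?_⟩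
  have hlow : (⌊t⌋₊ : ℝ) - t < 0 :=
    (sub_nonpos.2 (Nat.floor_le ht)).lt_of_ne fun h => hne ⌊t⌋₊ (by rw [hlin, h, mul_zero])
  have hup : 0 < (⌊t⌋₊ : ℝ) + 1 - t := by linarith [Nat.lt_floor_add_one t]
  rw [hlin, hlin, mul_mul_mul_comm]
  exact mul_neg_of_pos_of_neg (mul_self_pos.2 hb) (mul_neg_of_neg_of_pos hlow hup)

lemma abs_div_sub_le_of_straddle {A p q r s : ℝ} (hq : 0 < q) (hs : 1 ≤ s)
    (hdet : |r * q - s * p| = 1) (h : (p - A * q) * (r - A * s) < 0) :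
    |p / q - A| ≤ 1 / q := by
  rw [show r * q - s * p = (r - A * s) * q - (p - A * q) * s by ring] at hdet
  have hnum : |p - A * q| ≤ 1 := by
    rcases lt_or_gt_of_ne (left_ne_zero_of_mul h.ne) with hu | hu
    · have hv : 0 < r - A * s := by nlinarith
      rw [abs_of_neg hu]
      rw [abs_of_pos (by nlinarith)] at hdet
      nlinarith [mul_pos hv hq, mul_nonneg (neg_nonneg.2 hu.le) (sub_nonneg.2 hs)]
    · have hv : r - A * s < 0 := by nlinarith
      rw [abs_of_pos hu]
      rw [abs_of_neg (by nlinarith)] at hdet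
      nlinarith [mul_neg_of_neg_of_pos hv hq, mul_nonneg hu.le (sub_nonneg.2 hs)]
  rw [show p / q - A = (p - A * q) / q by field_simp, abs_div, abs_of_pos hq]
  gcongr

/-- Farey neighbours `p/q` (even) and `r/s` (odd/odd) in `[0, 1]` with `A` strictly between them. -/
structure EvenOddBracket (A : ℝ) where
  p : ℕ
  q : ℕ
  r : ℕ
  s : ℕ
  odd_add : Odd (p + q)
  odd_r : Odd r
  odd_s : Odd s
  p_le_q : p ≤ q
  r_le_s : r ≤ s
  det : ((r : ℤ) * q - (s : ℤ) * p).natAbs = 1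
  straddle : ((p : ℝ) - A * q) * ((r : ℝ) - A * s) < 0

namespace EvenOddBracket

variable {A : ℝ} (B : EvenOddBracket A)

lemma coprime : B.p.Coprime B.q := by
  rw [← Nat.isCoprime_iff_coprime]
  rcases Int.natAbs_eq_iff.1 B.det with h | h
  · exact ⟨-B.s, B.r, by push_cast at h; linarith⟩
  · exact ⟨B.s, -B.r, by push_cast at h; linarith⟩

lemma p_lt_q : B.p < B.q := by
  obtain ⟨k, hk⟩ := B.odd_add
  have := B.p_le_q
  omega

lemma even_mul : Even (B.p * B.q) := by
  rcases Nat.even_or_odd B.p with h | h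
  · exact h.mul_right _
  · exact (Nat.odd_add.1 B.odd_add |>.1 h).mul_left _

lemma abs_div_sub_le : |(B.p : ℝ) / B.q - A| ≤ 1 / B.q := by
  have hdet := congrArg (Nat.cast : ℕ → ℝ) B.det
  rw [Nat.cast_natAbs] at hdet
  push_cast at hdet
  exact abs_div_sub_le_of_straddle (by exact_mod_cast (Nat.zero_le _).trans_lt B.p_lt_q)
    (by exact_mod_cast B.odd_s.pos) hdet B.straddle

def init (hA0 : 0 < A) (hA1 : A < 1) : EvenOddBracket A where
  p := 0
  q := 1
  r := 1
  s := 1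
  odd_add := odd_one
  odd_r := odd_one
  odd_s := odd_one
  p_le_q := zero_le_one
  r_le_s := le_rfl
  det := rfl
  straddle := by push_cast; nlinarith

lemma exists_succ_of_sign_change {j j' : ℕ} (hj : Odd j) (hj' : Even j')
    (hjj' : ((j : ℤ) - j').natAbs = 1)
    (h : (((B.r + j * B.p : ℕ) : ℝ) - A * (B.s + j * B.q : ℕ)) *
      (((B.r + j' * B.p : ℕ) : ℝ) - A * (B.s + j' * B.q : ℕ)) < 0) :
    ∃ B' : EvenOddBracket A, IsEvenPred B'.p B'.q B.p B.q ∧ 0 < B'.p ∧ B.q < B'.q := by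
  have hr := B.odd_r.pos
  refine ⟨⟨B.r + j * B.p, B.s + j * B.q, B.r + j' * B.p, B.s + j' * B.q, ?_,
    B.odd_r.add_even (hj'.mul_right _), B.odd_s.add_even (hj'.mul_right _),
    add_le_add B.r_le_s (Nat.mul_le_mul_left j B.p_le_q),
    add_le_add B.r_le_s (Nat.mul_le_mul_left j' B.p_le_q), ?_, h⟩,
    ⟨B.coprime, B.p_lt_q, B.even_mul, ?_, ?_⟩, Nat.add_pos_left hr _, ?_⟩
  · rw [add_add_add_comm, ← mul_add]
    exact (B.odd_r.add_odd B.odd_s).add_odd (hj.mul B.odd_add)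
  · rw [show ((B.r + j' * B.p : ℕ) : ℤ) * (B.s + j * B.q : ℕ) -
          (B.s + j' * B.q : ℕ) * (B.r + j * B.p : ℕ) =
          ((j : ℤ) - j') * (B.r * B.q - B.s * B.p) by push_cast; ring,
      Int.natAbs_mul, hjj', B.det]
  · rw [show ((B.r + j * B.p : ℕ) : ℤ) * B.q - (B.s + j * B.q : ℕ) * B.p =
        B.r * B.q - B.s * B.p by push_cast; ring]
    exact B.det
  · nlinarith [B.odd_s.pos, hj.pos]
  · nlinarith [B.odd_s.pos, hj.pos]

lemma exists_succ (hA : Irrational A) :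
    ∃ B' : EvenOddBracket A, IsEvenPred B'.p B'.q B.p B.q ∧ 0 < B'.p ∧ B.q < B'.q := by
  have hlin : ∀ k : ℕ, ((B.r + k * B.p : ℕ) : ℝ) - A * (B.s + k * B.q : ℕ) =
      ((B.r : ℝ) - A * B.s) + k * ((B.p : ℝ) - A * B.q) := fun k => by push_cast; ring
  obtain ⟨k, hk⟩ := exists_nat_sign_change (by rw [mul_comm]; exact B.straddle)
    fun k => hlin k ▸ hA.natCast_sub_mul_ne_zero _ (by have := B.odd_s.pos; omega)
  rw [← hlin, show (k : ℝ) + 1 = ((k + 1 : ℕ) : ℝ) by push_cast; ring, ← hlin] at hk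
  rcases Nat.even_or_odd k with hk2 | hk2
  · exact B.exists_succ_of_sign_change hk2.add_one hk2 (by simp) (by rwa [mul_comm])
  · exact B.exists_succ_of_sign_change hk2 hk2.add_one (by simp) hk

end EvenOddBracket

/-- existence of an even predecessor sequence converging to an
irrational A ∈ (0,1). -/
theorem exists_evenPred_sequence (A : ℝ) (hA0 : 0 < A) (hA1 : A < 1)
    (hirr : Irrational A) :
    ∃ p q : ℕ → ℕ, (∀ n, EvenParam (p n) (q n)) ∧
      (∀ n, IsEvenPred (p (n + 1)) (q (n + 1)) (p n) (q n)) ∧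
      Filter.Tendsto (fun n => (p n : ℝ) / (q n : ℝ)) Filter.atTop (nhds A) := by
  choose next hpred hpos hgrow using fun B : EvenOddBracket A => B.exists_succ hirr
  let B : ℕ → EvenOddBracket A := fun n => next^[n + 1] (.init hA0 hA1)
  have hB : ∀ n, B n = next (next^[n] (.init hA0 hA1)) := fun n =>
    Function.iterate_succ_apply' next n _
  have hq : StrictMono fun n => (B n).q := strictMono_nat_of_lt_succ fun n => by
    simp only [hB (n + 1)]; exact hgrow _
  refine ⟨fun n => (B n).p, fun n => (B n).q,
    fun n => ⟨(B n).coprime, by simp only [hB n]; exact hpos _, (B n).p_lt_q, (B n).even_mul⟩,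
    fun n => by simp only [hB (n + 1)]; exact hpred _, ?_⟩
  have hinv : Filter.Tendsto (fun n => 1 / ((B n).q : ℝ)) Filter.atTop (nhds 0) :=
    tendsto_const_nhds.div_atTop (tendsto_natCast_atTop_atTop.comp hq.tendsto_atTop)
  exact tendsto_iff_norm_sub_tendsto_zero.2
    (squeeze_zero (fun n => norm_nonneg _) (fun n => (B n).abs_div_sub_le) hinv)
end

section
/- Let A ∈ (0,1) be irrational and let {p_n/q_n} be a sequence of even rational parameters converging to A such that for every n, p_n/q_n is the even predecessor of p_{n+1}/q_{n+1}. Then there are infinitely many n such that 4τ_{n+1} > ω_{n+1}, where ω_{n+1} = p_{n+1} + q_{n+1} and τ_{n+1} is the tune of p_{n+1}/q_{n+1}. -/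
lemma odd_omega' {p q : ℕ} (hco : Nat.Coprime p q) (hev : Even (p * q)) : Odd (p + q) := by
  have h3 : 2 ∣ p ∨ 2 ∣ q := (Nat.even_mul.mp hev).imp Even.two_dvd Even.two_dvd
  have h2 : ¬(2 ∣ p ∧ 2 ∣ q) := by
    rintro ⟨h1, h2⟩
    have := Nat.dvd_gcd h1 h2
    rw [hco] at this
    omega
  rw [Nat.odd_iff]; omega

lemma tune_exists' {p q p' q' : ℕ} (hpar : EvenParam p q) (hpar' : EvenParam p' q')
    (hpred : IsEvenPred p q p' q') :
    ∃ τ, IsTune p q τ ∧ 2 * τ = p + q - (p' + q') := by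
  obtain ⟨hco, hp0, hpq, hev⟩ := hpar
  obtain ⟨hco', hp0', hpq', hev'⟩ := hpar'
  obtain ⟨-, -, -, hcross, hsum⟩ := hpred
  have ho : (p + q) % 2 = 1 := Nat.odd_iff.mp (odd_omega' hco hev)
  have ho' : (p' + q') % 2 = 1 := Nat.odd_iff.mp (odd_omega' hco' hev')
  refine ⟨(p + q - (p' + q')) / 2, ⟨?_, ?_, ?_⟩, ?_⟩
  · omega
  · omega
  · have hc : (p : ℤ) * q' - (q : ℤ) * p' = 1 ∨ (p : ℤ) * q' - (q : ℤ) * p' = -1 := by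
      rcases Int.natAbs_eq ((p : ℤ) * q' - (q : ℤ) * p') with h | h <;> rw [hcross] at h <;> omega
    have hτ : (2 : ℤ) * (((p + q - (p' + q')) / 2 : ℕ) : ℤ) = (p : ℤ) + q - (p' + q') := by omega
    rcases hc with h | h
    · right
      exact ⟨(p : ℤ) - p', by linear_combination (p : ℤ) * hτ - h⟩
    · left
      exact ⟨(p : ℤ) - p', by linear_combination (p : ℤ) * hτ - h⟩
  · omega

lemma pred_le' {p q p' q' : ℕ} (hp0 : 0 < p) (hpq : p < q)
    (hq' : p' < q') (hcross : ((p : ℤ) * q' - (q : ℤ) * p').natAbs = 1)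
    (hsum : p' + q' < p + q) : p' ≤ p ∧ q' < q := by
  have he : (p : ℤ) * q' - (q : ℤ) * p' = 1 ∨ (p : ℤ) * q' - (q : ℤ) * p' = -1 := by
    rcases Int.natAbs_eq ((p : ℤ) * q' - (q : ℤ) * p') with h | h <;> rw [hcross] at h <;> omega
  have hP : (1 : ℤ) ≤ p := by exact_mod_cast hp0
  have hQ : (p : ℤ) < q := by exact_mod_cast hpq
  have hq'' : (p' : ℤ) < q' := by exact_mod_cast hq'
  have hs : (p' : ℤ) + q' < p + q := by exact_mod_cast hsum
  have hp'0 : (0 : ℤ) ≤ p' := Int.natCast_nonneg _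
  have hqq : q' < q := by
    by_contra hc
    have hc' : (q : ℤ) ≤ q' := by omega
    rcases he with h | h <;>
      nlinarith [mul_nonneg (by linarith : (0:ℤ) ≤ (p:ℤ) + q) (by linarith : (0:ℤ) ≤ (q':ℤ) - q)]
  refine ⟨?_, hqq⟩
  by_contra hc
  have hc' : (p : ℤ) + 1 ≤ p' := by omega
  have hq2 : (q' : ℤ) ≤ q - 1 := by
    have : (q' : ℤ) < q := by exact_mod_cast hqq
    omega
  rcases he with h | h <;> nlinarith

lemma uniq_sol' {P Q r1 s1 r2 s2 e1 e2 : ℤ} (hP : 0 < P) (hQ : 0 < Q)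
    (h1 : P * s1 - Q * r1 = e1) (h2 : P * s2 - Q * r2 = e2)
    (he1 : e1 = 1 ∨ e1 = -1) (he2 : e2 = 1 ∨ e2 = -1)
    (hr1 : 0 ≤ r1) (hs1 : 0 ≤ s1) (hr2 : 0 ≤ r2) (hs2 : 0 ≤ s2)
    (hsum1 : r1 + s1 < P + Q) (hsum2 : r2 + s2 < P + Q)
    (hev1 : Even (r1 + s1)) (hev2 : Even (r2 + s2)) (hodd : Odd (P + Q)) :
    r1 = r2 ∧ s1 = s2 := by
  have hco : IsCoprime Q P := by
    rcases he1 with h | h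
    · exact ⟨-r1, s1, by linarith⟩
    · exact ⟨r1, -s1, by linarith⟩
  have hQ0 : Q ≠ 0 := by linarith
  by_cases hee : e1 = e2
  · have hdvd : Q ∣ P * (s1 - s2) := ⟨r1 - r2, by linarith [h1, h2]⟩
    obtain ⟨k, hk⟩ := hco.dvd_of_dvd_mul_left hdvd
    have hr : r1 - r2 = P * k := by
      have h3 : Q * (r1 - r2) = Q * (P * k) := by
        have : P * (s1 - s2) = Q * (r1 - r2) := by linarith
        rw [hk] at this; linarith [this]
      exact mul_left_cancel₀ hQ0 h3
    have hkey : (r1 + s1) - (r2 + s2) = (P + Q) * k := by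
      rw [mul_comm Q k] at hk
      nlinarith [hk, hr]
    have hk0 : k = 0 := by nlinarith [hsum1, hsum2, hkey]
    rw [hk0, mul_zero] at hr hk
    constructor <;> linarith
  · have hee' : e1 + e2 = 0 := by rcases he1 with h | h <;> rcases he2 with h' | h' <;> omega
    have hdvd : Q ∣ P * (s1 + s2) := ⟨r1 + r2, by linarith⟩
    obtain ⟨k, hk⟩ := hco.dvd_of_dvd_mul_left hdvd
    have hr : r1 + r2 = P * k := by
      have h3 : Q * (r1 + r2) = Q * (P * k) := by
        have : P * (s1 + s2) = Q * (r1 + r2) := by linarith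
        rw [hk] at this; linarith [this]
      exact mul_left_cancel₀ hQ0 h3
    have hkey : (r1 + s1) + (r2 + s2) = (P + Q) * k := by
      rw [mul_comm Q k] at hk
      nlinarith [hk, hr]
    have hkev : Even k := by
      have : Even ((P + Q) * k) := by rw [← hkey]; exact hev1.add hev2
      rcases Int.even_mul.mp this with h | h
      · exact absurd h (Int.not_even_iff_odd.mpr hodd)
      · exact h
    have hk01 : 0 ≤ k ∧ k ≤ 1 := by constructor <;> nlinarith [hkey, hsum1, hsum2]
    have hk0 : k = 0 := by
      rcases hkev with ⟨m, hm⟩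
      omega
    rw [hk0, mul_zero] at hr
    have hrr : r1 = 0 ∧ r2 = 0 := by constructor <;> linarith
    have hs0 : s1 + s2 = 0 := by rw [hk0, mul_zero] at hk; linarith [hk]
    have : e1 = 0 := by nlinarith [h1, hrr.1]
    omega

/-- an even predecessor sequence converging to an irrational has
infinitely many indices n with 4τ_{n+1} > ω_{n+1}. -/
theorem infinitely_many_large_tune (A : ℝ) (hA0 : 0 < A) (hA1 : A < 1)
    (hirr : Irrational A) (p q : ℕ → ℕ)
    (hparam : ∀ n, EvenParam (p n) (q n))
    (hpred : ∀ n, IsEvenPred (p (n + 1)) (q (n + 1)) (p n) (q n))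
    (hlim : Filter.Tendsto (fun n => (p n : ℝ) / (q n : ℝ)) Filter.atTop (nhds A)) :
    {n : ℕ | ∃ τ, IsTune (p (n + 1)) (q (n + 1)) τ ∧
      p (n + 1) + q (n + 1) < 4 * τ}.Infinite := by
  by_contra hfin
  rw [Set.not_infinite] at hfin
  obtain ⟨N, hN⟩ := hfin.bddAbove
  -- basic facts
  have hp0 : ∀ n, 0 < p n := fun n => (hparam n).2.1
  have hq0 : ∀ n, p n < q n := fun n => (hparam n).2.2.1
  have ho : ∀ n, (p n + q n) % 2 = 1 :=
    fun n => Nat.odd_iff.mp (odd_omega' (hparam n).1 (hparam n).2.2.2)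
  have hlt : ∀ n, p n + q n < p (n + 1) + q (n + 1) := fun n => (hpred n).2.2.2.2
  have hcv : ∀ n, (p (n+1) : ℤ) * q n - (q (n+1) : ℤ) * p n = 1 ∨
      (p (n+1) : ℤ) * q n - (q (n+1) : ℤ) * p n = -1 := by
    intro n
    have hcross := (hpred n).2.2.2.1
    rcases Int.natAbs_eq ((p (n+1) : ℤ) * q n - (q (n+1) : ℤ) * p n) with h | h <;>
      rw [hcross] at h <;> omega
  have hmono : ∀ n, p n ≤ p (n + 1) ∧ q n < q (n + 1) := fun n =>
    pred_le' (hp0 (n+1)) (hq0 (n+1)) (hq0 n) (hpred n).2.2.2.1 (hpred n).2.2.2.2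
  -- small steps beyond N
  have hsmall : ∀ n, N < n → p (n + 1) + q (n + 1) ≤ 2 * (p n + q n) := by
    intro n hn
    obtain ⟨τ, hτ, h2τ⟩ := tune_exists' (hparam (n+1)) (hparam n) (hpred n)
    by_contra hc
    have hin : n ∈ {n : ℕ | ∃ τ, IsTune (p (n + 1)) (q (n + 1)) τ ∧
        p (n + 1) + q (n + 1) < 4 * τ} := ⟨τ, hτ, by have := hlt n; omega⟩
    exact absurd (hN hin) (by omega)
  -- steps are constant beyond N
  have hconst : ∀ n, N ≤ n →
      ((p (n+2) : ℤ) - p (n+1) = (p (n+1) : ℤ) - p n ∧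
       (q (n+2) : ℤ) - q (n+1) = (q (n+1) : ℤ) - q n) := by
    intro n hn
    have h1 : (p (n+1) : ℤ) * ((q (n+1) : ℤ) - q n) - (q (n+1) : ℤ) * ((p (n+1) : ℤ) - p n)
        = -((p (n+1) : ℤ) * q n - (q (n+1) : ℤ) * p n) := by ring
    have h2 : (p (n+1) : ℤ) * ((q (n+2) : ℤ) - q (n+1)) - (q (n+1) : ℤ) * ((p (n+2) : ℤ) - p (n+1))
        = -((p (n+2) : ℤ) * q (n+1) - (q (n+2) : ℤ) * p (n+1)) := by ring
    have hs2 := hsmall (n+1) (by omega)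
    have key := uniq_sol' (P := (p (n+1) : ℤ)) (Q := (q (n+1) : ℤ))
      (r1 := (p (n+2) : ℤ) - p (n+1)) (s1 := (q (n+2) : ℤ) - q (n+1))
      (r2 := (p (n+1) : ℤ) - p n) (s2 := (q (n+1) : ℤ) - q n)
      (e1 := -((p (n+2) : ℤ) * q (n+1) - (q (n+2) : ℤ) * p (n+1)))
      (e2 := -((p (n+1) : ℤ) * q n - (q (n+1) : ℤ) * p n))
      (by exact_mod_cast hp0 (n+1))
      (by have h3 := hp0 (n+1); have h4 := hq0 (n+1); omega)
      h2 h1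
      (by rcases hcv (n+1) with h | h <;> rw [h] <;> norm_num)
      (by rcases hcv n with h | h <;> rw [h] <;> norm_num)
      (by have h3 := (hmono (n+1)).1; have h4 : p (n+1+1) = p (n+2) := rfl; omega)
      (by have h3 := (hmono (n+1)).2; have h4 : q (n+1+1) = q (n+2) := rfl; omega)
      (by have := (hmono n).1; omega)
      (by have := (hmono n).2; omega)
      (by have h3 := ho (n+1); have h4 := ho (n+2)
          have h5 : p (n+1+1) = p (n+2) := rfl; have h6 : q (n+1+1) = q (n+2) := rfl; omega)
      (by have h3 := hlt n; have h4 := hp0 n; omega)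
      (by rw [Int.even_iff]; have h3 := ho (n+1); have h4 := ho (n+2); omega)
      (by rw [Int.even_iff]; have h3 := ho n; have h4 := ho (n+1); omega)
      (by rw [Int.odd_iff]; have h3 := ho (n+1); omega)
    exact key
  -- closed form
  set a : ℤ := (p (N+1) : ℤ) - p N with ha
  set b : ℤ := (q (N+1) : ℤ) - q N with hb
  have hab : ∀ n, N ≤ n → (p (n+1) : ℤ) - p n = a ∧ (q (n+1) : ℤ) - q n = b := by
    intro n hn
    induction n, hn using Nat.le_induction with
    | base => exact ⟨rfl, rfl⟩
    | succ n hn ih =>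
      obtain ⟨h1, h2⟩ := hconst n hn
      exact ⟨h1.trans ih.1, h2.trans ih.2⟩
  have hclosed : ∀ k, (p (N + k) : ℤ) = p N + k * a ∧ (q (N + k) : ℤ) = q N + k * b := by
    intro k
    induction k with
    | zero => simp
    | succ k ih =>
      obtain ⟨h1, h2⟩ := hab (N + k) (by omega)
      constructor
      · push_cast
        have h3 : (p (N + k + 1) : ℤ) = p (N + k) + a := by linarith
        rw [show N + (k+1) = N + k + 1 from rfl, h3, ih.1]; ring
      · push_cast
        have h3 : (q (N + k + 1) : ℤ) = q (N + k) + b := by linarith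
        rw [show N + (k+1) = N + k + 1 from rfl, h3, ih.2]; ring
  have hb1 : 1 ≤ b := by have := (hmono N).2; zify at this; omega
  have ha0 : 0 ≤ a := by have := (hmono N).1; zify at this; omega
  have hqN : 2 ≤ q N := by have := hp0 N; have := hq0 N; omega
  -- the constant cross product
  have hcN : (p N : ℤ) * b - (q N : ℤ) * a = 1 ∨ (p N : ℤ) * b - (q N : ℤ) * a = -1 := by
    have : (p N : ℤ) * b - (q N : ℤ) * a
        = -((p (N+1) : ℤ) * q N - (q (N+1) : ℤ) * p N) := by rw [ha, hb]; ring
    rcases hcv N with h | h <;> rw [this, h] <;> simp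
  -- limits
  have htend1 : Filter.Tendsto (fun k => (p (N + k) : ℝ) / (q (N + k) : ℝ))
      Filter.atTop (nhds A) := by
    refine hlim.comp ?_
    exact Filter.tendsto_atTop.mpr fun m => Filter.eventually_atTop.mpr ⟨m, fun n hn => by omega⟩
  have htend2 : Filter.Tendsto (fun k => (p (N + k) : ℝ) / (q (N + k) : ℝ))
      Filter.atTop (nhds ((a : ℝ) / b)) := by
    rw [tendsto_iff_dist_tendsto_zero]
    apply squeeze_zero (fun k => dist_nonneg) (g := fun k : ℕ => 1 / ((k : ℝ) + 1))
    · intro k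
      obtain ⟨hpk, hqk⟩ := hclosed k
      have hqbig : (k : ℤ) + 2 ≤ (q (N + k) : ℤ) := by
        rw [hqk]
        nlinarith [hb1, (by exact_mod_cast hqN : (2:ℤ) ≤ (q N : ℤ)), Int.natCast_nonneg k]
      have hk0 : (0 : ℝ) ≤ (k : ℝ) := Nat.cast_nonneg k
      have hqR : (k : ℝ) + 2 ≤ (q (N + k) : ℝ) := by exact_mod_cast hqbig
      have hqpos : (0 : ℝ) < (q (N + k) : ℝ) := by linarith
      have hbR : (1 : ℝ) ≤ (b : ℝ) := by exact_mod_cast hb1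
      have hbne : (b : ℝ) ≠ 0 := by linarith
      have hqne : ((q (N + k) : ℝ)) ≠ 0 := ne_of_gt hqpos
      have hnum : ((p (N + k) : ℤ) * b - (q (N + k) : ℤ) * a) = (p N : ℤ) * b - (q N : ℤ) * a := by
        rw [hpk, hqk]; ring
      have hnumR : |(p (N + k) : ℝ) * (b : ℝ) - (q (N + k) : ℝ) * (a : ℝ)| = 1 := by
        have h3 : (p (N + k) : ℝ) * (b : ℝ) - (q (N + k) : ℝ) * (a : ℝ)
            = (((p (N + k) : ℤ) * b - (q (N + k) : ℤ) * a : ℤ) : ℝ) := by push_cast; ring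
        rw [h3, hnum]
        rcases hcN with h | h <;> rw [h] <;> norm_num
      rw [Real.dist_eq]
      have heq : (p (N + k) : ℝ) / (q (N + k) : ℝ) - (a : ℝ) / (b : ℝ)
          = ((p (N + k) : ℝ) * b - (q (N + k) : ℝ) * a) / ((q (N + k) : ℝ) * b) := by
        field_simp
      have hQb : (0 : ℝ) < (q (N + k) : ℝ) * b := by nlinarith
      rw [heq, abs_div, hnumR, abs_of_pos hQb]
      apply one_div_le_one_div_of_le
      · positivity
      · nlinarith
    · exact tendsto_one_div_add_atTop_nhds_zero_nat
  have hAeq : A = (a : ℝ) / b := tendsto_nhds_unique htend1 htend2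
  have : A = ((a / b : ℚ) : ℝ) := by rw [hAeq]; push_cast; ring
  exact hirr ⟨(a : ℚ) / b, this.symm⟩
end

section
/- Let A ∈ (0,1) be irrational and let {p_n/q_n} be a sequence of even rational parameters converging to A such that for every n, p_n/q_n is the even predecessor of p_{n+1}/q_{n+1}. If n is an index with 2ω_n < ω_{n+1} (where ω_k = p_k + q_k), then |A − p_n/q_n| < 4/ω_n². -/
/-- Core integer step: if `u/v` lies strictly between the Farey pair `c1/d1 < c2/d2`
(in the sense of cross-multiplied inequalities) and `u'/v'` is a Farey neighbor of `u/v`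
with `v < v'`, then `u'/v'` also lies strictly between. -/
private lemma farey_step_pos (c1 d1 c2 d2 u v u' v' : ℤ)
    (hd1 : 0 < d1) (hd2 : 0 < d2) (hv : 0 < v) (hvv : v < v')
    (hab : c2 * d1 - c1 * d2 = 1)
    (hyy : (u * v' - v * u').natAbs = 1)
    (h1 : 1 ≤ u * d1 - c1 * v) (h2 : 1 ≤ c2 * v - u * d2) :
    1 ≤ u' * d1 - c1 * v' ∧ 1 ≤ c2 * v' - u' * d2 := by
  have hveq : (u * d1 - c1 * v) * d2 + (c2 * v - u * d2) * d1 = v * (c2 * d1 - c1 * d2) := by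
    ring
  rw [hab, mul_one] at hveq
  have hvge : d1 + d2 ≤ v := by nlinarith
  have hE : u * v' - v * u' = 1 ∨ u * v' - v * u' = -1 := by omega
  have key1 : (u' * d1 - c1 * v') * v = (u * d1 - c1 * v) * v' - d1 * (u * v' - v * u') := by
    ring
  have key2 : (c2 * v' - u' * d2) * v = (c2 * v - u * d2) * v' + d2 * (u * v' - v * u') := by
    ring
  constructor
  · have hpos : 0 < (u' * d1 - c1 * v') * v := by
      rcases hE with h | h <;> rw [key1, h] <;> nlinarith
    nlinarith
  · have hpos : 0 < (c2 * v' - u' * d2) * v := by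
      rcases hE with h | h <;> rw [key2, h] <;> nlinarith
    nlinarith

private lemma cast_div_lt_div {a b c d : ℤ} (hb : 0 < b) (hd : 0 < d) :
    (a : ℝ) / b < (c : ℝ) / d ↔ a * d < c * b := by
  rw [div_lt_div_iff₀ (by exact_mod_cast hb) (by exact_mod_cast hd)]
  exact_mod_cast Iff.rfl

/-- Real-valued version of the Farey step, symmetric in the two interval endpoints. -/
private lemma farey_step (c1 d1 c2 d2 u v u' v' : ℤ)
    (hd1 : 0 < d1) (hd2 : 0 < d2) (hv : 0 < v) (hvv : v < v')
    (hab : (c1 * d2 - c2 * d1).natAbs = 1)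
    (hyy : (u * v' - v * u').natAbs = 1)
    (hy : ((u : ℝ) / v - c1 / d1) * ((u : ℝ) / v - c2 / d2) < 0) :
    ((u' : ℝ) / v' - c1 / d1) * ((u' : ℝ) / v' - c2 / d2) < 0 := by
  have hv' : (0:ℤ) < v' := lt_trans hv hvv
  rcases mul_neg_iff.mp hy with ⟨hpos, hneg⟩ | ⟨hneg, hpos⟩
  · -- c1/d1 < u/v < c2/d2
    have h1 : 1 ≤ u * d1 - c1 * v := by
      have := (cast_div_lt_div hd1 hv).mp (by linarith [sub_pos.mp hpos] : (c1:ℝ)/d1 < (u:ℝ)/v)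
      omega
    have h2 : 1 ≤ c2 * v - u * d2 := by
      have := (cast_div_lt_div hv hd2).mp (by linarith [sub_neg.mp hneg] : (u:ℝ)/v < (c2:ℝ)/d2)
      omega
    have hor : c2 * d1 - c1 * d2 = 1 := by
      have hveq : (u * d1 - c1 * v) * d2 + (c2 * v - u * d2) * d1 = v * (c2 * d1 - c1 * d2) := by
        ring
      have hposv : 0 < v * (c2 * d1 - c1 * d2) := by rw [← hveq]; nlinarith
      have hcases : c2 * d1 - c1 * d2 = 1 ∨ c2 * d1 - c1 * d2 = -1 := by omega
      rcases hcases with h | h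
      · exact h
      · rw [h] at hposv; linarith
    obtain ⟨g1, g2⟩ := farey_step_pos c1 d1 c2 d2 u v u' v' hd1 hd2 hv hvv hor hyy h1 h2
    have r1 : (c1:ℝ)/d1 < (u':ℝ)/v' := (cast_div_lt_div hd1 hv').mpr (by omega)
    have r2 : (u':ℝ)/v' < (c2:ℝ)/d2 := (cast_div_lt_div hv' hd2).mpr (by omega)
    exact mul_neg_of_pos_of_neg (by linarith) (by linarith)
  · -- c2/d2 < u/v < c1/d1
    have h1 : 1 ≤ u * d2 - c2 * v := by
      have := (cast_div_lt_div hd2 hv).mp (by linarith [sub_pos.mp hpos] : (c2:ℝ)/d2 < (u:ℝ)/v)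
      omega
    have h2 : 1 ≤ c1 * v - u * d1 := by
      have := (cast_div_lt_div hv hd1).mp (by linarith [sub_neg.mp hneg] : (u:ℝ)/v < (c1:ℝ)/d1)
      omega
    have hor : c1 * d2 - c2 * d1 = 1 := by
      have hveq : (u * d2 - c2 * v) * d1 + (c1 * v - u * d1) * d2 = v * (c1 * d2 - c2 * d1) := by
        ring
      have hposv : 0 < v * (c1 * d2 - c2 * d1) := by rw [← hveq]; nlinarith
      have hcases : c1 * d2 - c2 * d1 = 1 ∨ c1 * d2 - c2 * d1 = -1 := by omega
      rcases hcases with h | h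
      · exact h
      · rw [h] at hposv; linarith
    obtain ⟨g1, g2⟩ := farey_step_pos c2 d2 c1 d1 u v u' v' hd2 hd1 hv hvv hor hyy h1 h2
    have r1 : (c2:ℝ)/d2 < (u':ℝ)/v' := (cast_div_lt_div hd2 hv').mpr (by omega)
    have r2 : (u':ℝ)/v' < (c1:ℝ)/d1 := (cast_div_lt_div hv' hd1).mpr (by omega)
    exact mul_neg_of_neg_of_pos (by linarith) (by linarith)

set_option maxHeartbeats 2000000 in
/-- Diophantine estimate when 2ω_n < ω_{n+1}. -/
theorem diophantine_estimate (A : ℝ) (hA0 : 0 < A) (hA1 : A < 1)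
    (hirr : Irrational A) (p q : ℕ → ℕ)
    (hparam : ∀ n, EvenParam (p n) (q n))
    (hpred : ∀ n, IsEvenPred (p (n + 1)) (q (n + 1)) (p n) (q n))
    (hlim : Filter.Tendsto (fun n => (p n : ℝ) / (q n : ℝ)) Filter.atTop (nhds A))
    (n : ℕ) (hn : 2 * (p n + q n) < p (n + 1) + q (n + 1)) :
    |A - (p n : ℝ) / (q n : ℝ)| < 4 / ((p n : ℝ) + q n) ^ 2 := by
  -- basic facts
  have hp_pos : ∀ k, 0 < p k := fun k => (hparam k).2.1
  have hpq : ∀ k, p k < q k := fun k => (hparam k).2.2.1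
  have hq2 : ∀ k, 2 ≤ q k := fun k => lt_of_le_of_lt (hp_pos k) (hpq k)
  have hdet : ∀ k, ((p (k+1) : ℤ) * q k - (q (k+1) : ℤ) * p k).natAbs = 1 :=
    fun k => (hpred k).2.2.2.1
  have hω : ∀ k, p k + q k < p (k+1) + q (k+1) := fun k => (hpred k).2.2.2.2
  -- q is strictly increasing
  have hqmono : ∀ k, q k < q (k+1) := by
    intro k
    have hE : ((p (k+1) : ℤ) * q k - (q (k+1) : ℤ) * p k) = 1 ∨
        ((p (k+1) : ℤ) * q k - (q (k+1) : ℤ) * p k) = -1 := by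
      have := hdet k; omega
    have hid : (q k : ℤ) * ((p (k+1) : ℤ) + q (k+1)) - (q (k+1) : ℤ) * ((p k : ℤ) + q k)
        = (p (k+1) : ℤ) * q k - (q (k+1) : ℤ) * p k := by ring
    have hω' : ((p k : ℤ) + q k) + 1 ≤ (p (k+1) : ℤ) + q (k+1) := by exact_mod_cast hω k
    have hqk : (2 : ℤ) ≤ q k := by exact_mod_cast hq2 k
    have hωpos : (0 : ℤ) < (p k : ℤ) + q k := by positivity
    have : (q k : ℤ) < q (k+1) := by
      rcases hE with h | h <;> nlinarith
    exact_mod_cast this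
  -- the gap hypothesis gives q (n+1) ≥ 2 q n + 1
  have hq21 : 2 * q n + 1 ≤ q (n+1) := by
    have hE : ((p (n+1) : ℤ) * q n - (q (n+1) : ℤ) * p n) = 1 ∨
        ((p (n+1) : ℤ) * q n - (q (n+1) : ℤ) * p n) = -1 := by
      have := hdet n; omega
    have hid : (q n : ℤ) * ((p (n+1) : ℤ) + q (n+1)) - (q (n+1) : ℤ) * ((p n : ℤ) + q n)
        = (p (n+1) : ℤ) * q n - (q (n+1) : ℤ) * p n := by ring
    have hn' : 2 * ((p n : ℤ) + q n) + 1 ≤ (p (n+1) : ℤ) + q (n+1) := by exact_mod_cast hn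
    have hqk : (2 : ℤ) ≤ q n := by exact_mod_cast hq2 n
    have hωpos : (0 : ℤ) < (p n : ℤ) + q n := by positivity
    have : 2 * (q n : ℤ) + 1 ≤ q (n+1) := by
      rcases hE with h | h <;> nlinarith
    exact_mod_cast this
  -- set up the Farey interval endpoints: a = p n / q n, b = C / D
  set C : ℤ := (p (n+1) : ℤ) - p n with hC
  set D : ℤ := (q (n+1) : ℤ) - q n with hD
  have hDpos : 0 < D := by
    have := hq21; rw [hD]
    have h1 : (2 * q n + 1 : ℤ) ≤ q (n+1) := by exact_mod_cast hq21
    have h2 : (0:ℤ) < q n := by exact_mod_cast (hq2 n).trans_lt' (by norm_num)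
    linarith
  have hqnpos : (0:ℤ) < (q n : ℤ) := by exact_mod_cast lt_of_lt_of_le (by norm_num) (hq2 n)
  -- the fixed invariant: every later fraction lies strictly between p n / q n and C / D
  have hInv : ∀ k, n + 1 ≤ k →
      (((p k : ℤ) : ℝ) / ((q k : ℤ) : ℝ) - ((p n : ℤ) : ℝ) / ((q n : ℤ) : ℝ)) *
      (((p k : ℤ) : ℝ) / ((q k : ℤ) : ℝ) - (C : ℝ) / (D : ℝ)) < 0 := by
    intro k hk
    induction k, hk using Nat.le_induction with
    | base =>
      have hq1pos : (0:ℤ) < (q (n+1) : ℤ) := by exact_mod_cast lt_of_lt_of_le (by norm_num) (hq2 (n+1))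
      have hE : ((p (n+1) : ℤ) * q n - (q (n+1) : ℤ) * p n) = 1 ∨
          ((p (n+1) : ℤ) * q n - (q (n+1) : ℤ) * p n) = -1 := by
        have := hdet n; omega
      rcases hE with h | h
      · have r1 : ((p n : ℤ) : ℝ) / ((q n : ℤ) : ℝ) < ((p (n+1) : ℤ) : ℝ) / ((q (n+1) : ℤ) : ℝ) :=
          (cast_div_lt_div hqnpos hq1pos).mpr (by linarith [h])
        have r2 : ((p (n+1) : ℤ) : ℝ) / ((q (n+1) : ℤ) : ℝ) < (C : ℝ) / (D : ℝ) :=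
          (cast_div_lt_div hq1pos hDpos).mpr (by rw [hC, hD]; nlinarith)
        exact mul_neg_of_pos_of_neg (by linarith) (by linarith)
      · have r1 : ((p (n+1) : ℤ) : ℝ) / ((q (n+1) : ℤ) : ℝ) < ((p n : ℤ) : ℝ) / ((q n : ℤ) : ℝ) :=
          (cast_div_lt_div hq1pos hqnpos).mpr (by linarith [h])
        have r2 : (C : ℝ) / (D : ℝ) < ((p (n+1) : ℤ) : ℝ) / ((q (n+1) : ℤ) : ℝ) :=
          (cast_div_lt_div hDpos hq1pos).mpr (by rw [hC, hD]; nlinarith)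
        exact mul_neg_of_neg_of_pos (by linarith) (by linarith)
    | succ k hk ih =>
      have hqkpos : (0:ℤ) < (q k : ℤ) := by exact_mod_cast lt_of_lt_of_le (by norm_num) (hq2 k)
      have hqlt : (q k : ℤ) < (q (k+1) : ℤ) := by exact_mod_cast hqmono k
      refine farey_step (p n : ℤ) (q n : ℤ) C D (p k : ℤ) (q k : ℤ) (p (k+1) : ℤ) (q (k+1) : ℤ)
        hqnpos hDpos hqkpos hqlt ?_ ?_ ih
      · have hE := hdet n
        have : ((p n : ℤ) * D - C * (q n : ℤ)) =
            -((p (n+1) : ℤ) * q n - (q (n+1) : ℤ) * p n) := by rw [hC, hD]; ring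
        omega
      · have hE := hdet k
        have : ((p k : ℤ) * (q (k+1) : ℤ) - (q k : ℤ) * (p (k+1) : ℤ)) =
            -((p (k+1) : ℤ) * q k - (q (k+1) : ℤ) * p k) := by ring
        omega
  -- pass to the limit: A lies in the closed interval
  set a : ℝ := ((p n : ℤ) : ℝ) / ((q n : ℤ) : ℝ) with ha
  set b : ℝ := (C : ℝ) / (D : ℝ) with hb
  have hbetween : ∀ k, n + 1 ≤ k →
      min a b ≤ ((p k : ℤ) : ℝ) / ((q k : ℤ) : ℝ) ∧ ((p k : ℤ) : ℝ) / ((q k : ℤ) : ℝ) ≤ max a b := by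
    intro k hk
    have h := hInv k hk
    set y := ((p k : ℤ) : ℝ) / ((q k : ℤ) : ℝ)
    rcases le_total a b with hab | hab
    · rw [min_eq_left hab, max_eq_right hab]
      constructor <;> nlinarith
    · rw [min_eq_right hab, max_eq_left hab]
      constructor <;> nlinarith
  have hcast : ∀ k, ((p k : ℤ) : ℝ) / ((q k : ℤ) : ℝ) = (p k : ℝ) / (q k : ℝ) := by
    intro k; push_cast; ring
  have hAub : A ≤ max a b := by
    refine le_of_tendsto hlim (Filter.eventually_atTop.mpr ⟨n+1, fun k hk => ?_⟩)
    rw [← hcast k]; exact (hbetween k hk).2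
  have hAlb : min a b ≤ A := by
    refine ge_of_tendsto hlim (Filter.eventually_atTop.mpr ⟨n+1, fun k hk => ?_⟩)
    rw [← hcast k]; exact (hbetween k hk).1
  -- |A - a| ≤ |a - b| = 1/(q n * D)
  have hmm : min a b ≤ a ∧ a ≤ max a b := ⟨min_le_left a b, le_max_left a b⟩
  have habs : |A - a| ≤ |a - b| := by
    rcases le_total a b with h | h
    · rw [min_eq_left h] at hAlb; rw [max_eq_right h] at hAub
      rw [abs_of_nonneg (by linarith : (0:ℝ) ≤ A - a), abs_of_nonpos (by linarith : a - b ≤ 0)]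
      linarith
    · rw [min_eq_right h] at hAlb; rw [max_eq_left h] at hAub
      rw [abs_of_nonpos (by linarith : A - a ≤ 0), abs_of_nonneg (by linarith : (0:ℝ) ≤ a - b)]
      linarith
  have hablen : |a - b| = 1 / (((q n : ℤ) : ℝ) * (D : ℝ)) := by
    have hE : ((p (n+1) : ℤ) * q n - (q (n+1) : ℤ) * p n) = 1 ∨
        ((p (n+1) : ℤ) * q n - (q (n+1) : ℤ) * p n) = -1 := by
      have := hdet n; omega
    have hqr : (0:ℝ) < ((q n : ℤ) : ℝ) := by exact_mod_cast hqnpos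
    have hDr : (0:ℝ) < ((D : ℤ) : ℝ) := by exact_mod_cast hDpos
    have hid : a - b = (((p n : ℤ) * D - (q n : ℤ) * C : ℤ) : ℝ) / (((q n : ℤ) : ℝ) * (D : ℝ)) := by
      rw [ha, hb, div_sub_div _ _ (ne_of_gt hqr) (ne_of_gt hDr)]
      congr 1
      push_cast; ring
    have hval : ((p n : ℤ) * D - (q n : ℤ) * C) =
        -((p (n+1) : ℤ) * q n - (q (n+1) : ℤ) * p n) := by rw [hC, hD]; ring
    rcases hE with h | h
    · rw [hval, h] at hid
      rw [hid, abs_div, abs_of_pos (mul_pos hqr hDr)]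
      norm_num
    · rw [hval, h] at hid
      rw [hid, abs_div, abs_of_pos (mul_pos hqr hDr)]
      norm_num
  -- final numeric estimate
  have hnum : 1 / (((q n : ℤ) : ℝ) * (D : ℝ)) < 4 / ((p n : ℝ) + q n) ^ 2 := by
    have hqr : (0:ℝ) < ((q n : ℤ) : ℝ) := by exact_mod_cast hqnpos
    have hDr : (0:ℝ) < ((D : ℤ) : ℝ) := by exact_mod_cast hDpos
    have hωr : (0:ℝ) < (p n : ℝ) + q n := by positivity
    rw [div_lt_div_iff₀ (mul_pos hqr hDr) (by positivity)]
    have key : ((q n : ℤ) : ℝ) * ((D : ℤ) : ℝ) = (q n : ℝ) * ((q (n+1) : ℝ) - (q n : ℝ)) := by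
      rw [hD]; push_cast; ring
    rw [key]
    have h1 : 2 * (q n : ℝ) + 1 ≤ (q (n+1) : ℝ) := by exact_mod_cast hq21
    have h2 : (1 : ℝ) ≤ (p n : ℝ) := by exact_mod_cast hp_pos n
    have h3 : (p n : ℝ) + 1 ≤ (q n : ℝ) := by exact_mod_cast hpq n
    nlinarith [mul_nonneg (by linarith : (0:ℝ) ≤ (q (n+1) : ℝ) - (q n : ℝ) - (q n : ℝ) - 1)
        (by positivity : (0:ℝ) ≤ (q n : ℝ)),
      mul_nonneg (by linarith : (0:ℝ) ≤ (q n : ℝ) - 1 - (p n : ℝ))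
        (by positivity : (0:ℝ) ≤ (p n : ℝ) + 3 * (q n : ℝ))]
  have : |A - (p n : ℝ) / (q n : ℝ)| = |A - a| := by rw [ha, hcast n]
  rw [this]
  calc |A - a| ≤ |a - b| := habs
    _ = 1 / (((q n : ℤ) : ℝ) * (D : ℝ)) := hablen
    _ < 4 / ((p n : ℝ) + q n) ^ 2 := hnum
end
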